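/- arXiv:cs/0610131 — 5 statements merged into one kernel-verified Lean document; each statement's English description precedes it below -/
import Mathlib

section
/- In the reduction instance, in any valid schedule that completes all 4n tasks by the deadline T = E + nS + S/4, the first three tasks emitted by the master are sent to workers among P_1, …, P_{3n} (i.e., over links of costs x_i), and consequently the fourth task emitted by the master is sent to worker Q_{n−1}. -/
open scoped Classical

/-- A schedule on a star master–worker platform with `W` workers.  Worker `i` has
per-task communication time `c i`, per-task computation time `w i`, and initially
holds `L i` identical unit tasks.  All task transfers pass through the master under
the bidirectional one-port model (the master receives from at most one worker and
sends to at most one worker at any time, but may do both simultaneously); a worker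
cannot start processing a received task before its reception completes, and
computation and communication may overlap.  Since the tasks are identical, a
schedule is described by the worker→master receptions, the master→worker emissions
and the task executions, subject to availability (counting) constraints. -/
structure StarSchedule (W : ℕ) (c w : Fin W → ℝ) (L : Fin W → ℕ) where
  /-- number of worker→master transfers -/
  nRecv : ℕ
  /-- number of master→worker transfers -/
  nSend : ℕ
  /-- number of task executions -/
  nProc : ℕ
  /-- sender of the `k`-th worker→master transfer -/
  rsrc : Fin nRecv → Fin W
  /-- start time of the `k`-th worker→master transfer (it lasts `c (rsrc k)`) -/
  rstart : Fin nRecv → ℝ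
  /-- destination of the `k`-th master→worker transfer -/
  sdst : Fin nSend → Fin W
  /-- start time of the `k`-th master→worker transfer (it lasts `c (sdst k)`) -/
  sstart : Fin nSend → ℝ
  /-- the worker performing the `p`-th task execution -/
  pw : Fin nProc → Fin W
  /-- start time of the `p`-th task execution (it lasts `w (pw p)`) -/
  pstart : Fin nProc → ℝ
  rstart_nonneg : ∀ k, 0 ≤ rstart k
  sstart_nonneg : ∀ k, 0 ≤ sstart k
  pstart_nonneg : ∀ p, 0 ≤ pstart p
  /-- every task is eventually processed -/
  all_processed : nProc = ∑ i, L i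
  /-- the master receives from at most one worker at a time -/
  oneport_in : ∀ k k', k ≠ k' →
    rstart k + c (rsrc k) ≤ rstart k' ∨ rstart k' + c (rsrc k') ≤ rstart k
  /-- the master sends to at most one worker at a time -/
  oneport_out : ∀ k k', k ≠ k' →
    sstart k + c (sdst k) ≤ sstart k' ∨ sstart k' + c (sdst k') ≤ sstart k
  /-- the master can only forward tasks that it has completely received -/
  master_avail : ∀ t : ℝ,
    (Finset.univ.filter (fun k => sstart k ≤ t)).card ≤
      (Finset.univ.filter (fun k => rstart k + c (rsrc k) ≤ t)).card
  /-- a worker can only send or process tasks that it holds: at any time, the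
  number of emissions it has begun plus the number of executions it has begun does
  not exceed its initial load plus the number of tasks it has completely
  received -/
  worker_avail : ∀ (i : Fin W) (t : ℝ),
    (Finset.univ.filter (fun k => rsrc k = i ∧ rstart k ≤ t)).card +
      (Finset.univ.filter (fun p => pw p = i ∧ pstart p ≤ t)).card ≤
    L i + (Finset.univ.filter (fun k => sdst k = i ∧ sstart k + c (sdst k) ≤ t)).card
  /-- each worker processes at most one task at a time -/
  proc_seq : ∀ p p', p ≠ p' → pw p = pw p' →
    pstart p + w (pw p) ≤ pstart p' ∨ pstart p' + w (pw p') ≤ pstart p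

/-- The schedule has makespan at most `T`: every task execution finishes by `T`. -/
def FinishesBy {W : ℕ} {c w : Fin W → ℝ} {L : Fin W → ℕ}
    (σ : StarSchedule W c w L) (T : ℝ) : Prop :=
  ∀ p, σ.pstart p + w (σ.pw p) ≤ T
/-- Communication times of the reduction platform: worker `0` is `P` (per-task
communication time `S/4`), workers `1,…,3n` are the `Pᵢ` (communication time
`xᵢ = S/4 + yᵢ/8`), and workers `3n+1,…,4n` are `Q₀,…,Q_{n-1}` (communication
time `S/8`). -/
noncomputable def redC (n S : ℕ) (y : Fin (3*n) → ℕ) : Fin (4*n+1) → ℝ := fun i =>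
  if h0 : i.val = 0 then (S : ℝ) / 4
  else if h : i.val ≤ 3*n then (S : ℝ) / 4 + (y ⟨i.val - 1, by omega⟩ : ℝ) / 8
  else (S : ℝ) / 8

/-- Computation times of the reduction platform: `P` needs `T + 1` per task
(where `T = E + nS + S/4` is the deadline), each `Pᵢ` needs `E = (n+1)S`, and
`Q_q` (worker `3n+1+q`) needs `E + q·S`. -/
noncomputable def redW (n S : ℕ) : Fin (4*n+1) → ℝ := fun i =>
  if i.val = 0 then (((n : ℝ) + 1) * S + (n : ℝ) * S + (S : ℝ) / 4) + 1
  else if i.val ≤ 3*n then ((n : ℝ) + 1) * S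
  else ((n : ℝ) + 1) * S + ((i.val - (3*n+1) : ℕ) : ℝ) * S

/-- Initial loads of the reduction platform: worker `P` holds the `4n` tasks,
all other workers hold none. -/
def redL (n : ℕ) : Fin (4*n+1) → ℕ := fun i => if i.val = 0 then 4*n else 0

/-- The deadline `T = E + nS + S/4` with `E = (n+1)S`. -/
noncomputable def redT (n S : ℕ) : ℝ := ((n : ℝ) + 1) * S + (n : ℝ) * S + (S : ℝ) / 4

/-- `p` partitions the `3n` values `y i` into `n` triples each of sum exactly `S`. -/
def IsThreePartition (n S : ℕ) (y : Fin (3*n) → ℕ) (p : Fin (3*n) → Fin n) : Prop :=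
  ∀ g : Fin n, (Finset.univ.filter (fun i => p i = g)).card = 3 ∧
    ∑ i ∈ Finset.univ.filter (fun i => p i = g), y i = S

/-! ### Auxiliary lemmas -/

section AuxPacking

lemma interval_packing {ι : Type*} [DecidableEq ι] (st len : ι → ℝ) :
    ∀ (N : ℕ) (F : Finset ι), F.card ≤ N →
      (∀ a ∈ F, ∀ b ∈ F, a ≠ b → st a + len a ≤ st b ∨ st b + len b ≤ st a) →
      (∀ a ∈ F, 0 < len a) → (∀ a ∈ F, 0 ≤ st a) →
      ∀ B : ℝ, 0 ≤ B → (∀ a ∈ F, st a + len a ≤ B) →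
      ∑ a ∈ F, len a ≤ B := by
  intro N
  induction N with
  | zero =>
      intro F hF _ _ _ B hB _
      have : F = ∅ := Finset.card_eq_zero.mp (Nat.le_zero.mp hF)
      simp [this, hB]
  | succ N ih =>
      intro F hF hdisj hlen hst B hB hend
      rcases F.eq_empty_or_nonempty with rfl | hne
      · simp [hB]
      · obtain ⟨a, ha, hmax⟩ := F.exists_max_image st hne
        have hsub : F.erase a ⊆ F := Finset.erase_subset _ _
        have hcard : (F.erase a).card ≤ N := by
          have := Finset.card_erase_of_mem ha
          have := Finset.card_pos.mpr hne
          omega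
        have hend' : ∀ b ∈ F.erase a, st b + len b ≤ st a := by
          intro b hb
          have hbF := hsub hb
          have hba : b ≠ a := Finset.ne_of_mem_erase hb
          rcases hdisj b hbF a ha hba with h | h
          · exact h
          · exfalso
            have h1 : 0 < len a := hlen a ha
            have h2 : st b ≤ st a := hmax b hbF
            linarith
        have hrec : ∑ b ∈ F.erase a, len b ≤ st a :=
          ih (F.erase a) hcard (fun x hx y hy hxy => hdisj x (hsub hx) y (hsub hy) hxy)
            (fun x hx => hlen x (hsub hx)) (fun x hx => hst x (hsub hx))
            (st a) (hst a ha) hend'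
        have hsum : len a + ∑ b ∈ F.erase a, len b = ∑ b ∈ F, len b :=
          Finset.add_sum_erase _ _ ha
        have hA := hend a ha
        linarith

end AuxPacking

section AuxRank

noncomputable def rkOf {α : Type*} [Fintype α] (f : α → ℝ) (a : α) : ℕ :=
  (Finset.univ.filter (fun b => f b < f a)).card

variable {α : Type*} [Fintype α] {f : α → ℝ} {a b : α}

lemma rkOf_lt_rkOf (h : f a < f b) : rkOf f a < rkOf f b := by
  classical
  have hsub : Finset.univ.filter (fun x => f x < f a) ⊆
      Finset.univ.filter (fun x => f x < f b) := by
    intro x hx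
    simp only [Finset.mem_filter, Finset.mem_univ, true_and] at hx ⊢
    linarith
  apply Finset.card_lt_card
  rw [Finset.ssubset_iff_of_subset hsub]
  exact ⟨a, by simp [h], by simp⟩

lemma rkOf_inj (hf : Function.Injective f) (h : rkOf f a = rkOf f b) : a = b := by
  rcases lt_trichotomy (f a) (f b) with h1 | h1 | h1
  · exact absurd h (rkOf_lt_rkOf h1).ne
  · exact hf h1
  · exact absurd h.symm (rkOf_lt_rkOf h1).ne

lemma lt_of_rkOf_lt (h : rkOf f a < rkOf f b) : f a < f b := by
  rcases lt_trichotomy (f a) (f b) with h1 | h1 | h1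
  · exact h1
  · exfalso
    have : rkOf f a = rkOf f b := by unfold rkOf; simp only [h1]
    omega
  · exact absurd h (by have := rkOf_lt_rkOf h1; omega)

lemma rkOf_lt_card_downset {t : ℝ}
    (ha : a ∈ Finset.univ.filter (fun x => f x ≤ t)) :
    rkOf f a < (Finset.univ.filter (fun x => f x ≤ t)).card := by
  classical
  apply Finset.card_lt_card
  have hat : f a ≤ t := by simpa using ha
  have hsub : Finset.univ.filter (fun x => f x < f a) ⊆
      Finset.univ.filter (fun x => f x ≤ t) := by
    intro x hx
    simp only [Finset.mem_filter, Finset.mem_univ, true_and] at hx ⊢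
    linarith
  rw [Finset.ssubset_iff_of_subset hsub]
  exact ⟨a, ha, by simp⟩

lemma card_downset_le_rkOf {t : ℝ}
    (ha : a ∉ Finset.univ.filter (fun x => f x ≤ t)) :
    (Finset.univ.filter (fun x => f x ≤ t)).card ≤ rkOf f a := by
  classical
  apply Finset.card_le_card
  intro x hx
  have hat : ¬ f a ≤ t := by simpa using ha
  have hxt : f x ≤ t := by simpa using hx
  simp only [rkOf, Finset.mem_filter, Finset.mem_univ, true_and]
  linarith

lemma rkOf_surj (hf : Function.Injective f) {t : ℝ} :
    ∀ m < (Finset.univ.filter (fun x => f x ≤ t)).card,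
      ∃ a, a ∈ Finset.univ.filter (fun x => f x ≤ t) ∧ rkOf f a = m := by
  classical
  intro m hm
  have hmain := Finset.surj_on_of_inj_on_of_card_le
    (s := Finset.univ.filter (fun x => f x ≤ t))
    (t := Finset.range (Finset.univ.filter (fun x => f x ≤ t)).card)
    (fun a _ => rkOf f a)
    (fun a ha => Finset.mem_range.mpr (rkOf_lt_card_downset ha))
    (fun a₁ a₂ _ _ h => rkOf_inj hf h)
    (by simp)
  obtain ⟨a, ha, h⟩ := hmain m (Finset.mem_range.mpr hm)
  exact ⟨a, ha, h.symm⟩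

end AuxRank

section Plat
variable {n S : ℕ} {y : Fin (3*n) → ℕ}

def Qw (n : ℕ) (q : ℕ) (hq : q < n) : Fin (4*n+1) := ⟨3*n+1+q, by omega⟩

lemma redC_zero {i : Fin (4*n+1)} (h : i.val = 0) : redC n S y i = (S:ℝ)/4 := by
  simp [redC, h]

lemma redC_Q {i : Fin (4*n+1)} (h : 3*n < i.val) : redC n S y i = (S:ℝ)/8 := by
  have h0 : ¬ i.val = 0 := by omega
  have h1 : ¬ i.val ≤ 3*n := by omega
  simp [redC, h0, h1]

lemma redC_Qw {q : ℕ} (hq : q < n) : redC n S y (Qw n q hq) = (S:ℝ)/8 :=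
  redC_Q (by simp [Qw]; omega)

lemma redC_P_lb (hy : ∀ i, S < 4 * y i ∧ 2 * y i < S) {i : Fin (4*n+1)}
    (h1 : 1 ≤ i.val) (h2 : i.val ≤ 3*n) :
    (S:ℝ)/4 + (S:ℝ)/32 < redC n S y i := by
  have h0 : ¬ i.val = 0 := by omega
  have hcy := (hy ⟨i.val - 1, by omega⟩).1
  have : (S:ℝ) < 4 * (y ⟨i.val - 1, by omega⟩ : ℝ) := by exact_mod_cast hcy
  simp only [redC, h0, dif_neg, not_false_iff, h2, dif_pos]
  linarith

lemma redC_ge (hS : 0 < S) (i : Fin (4*n+1)) : (S:ℝ)/8 ≤ redC n S y i := by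
  have hS0 : (0:ℝ) < S := by exact_mod_cast hS
  by_cases h0 : i.val = 0
  · rw [redC_zero h0]; linarith
  · by_cases h2 : i.val ≤ 3*n
    · have hy0 : (0:ℝ) ≤ (y ⟨i.val - 1, by omega⟩ : ℝ) := by positivity
      simp only [redC, h0, dif_neg, not_false_iff, h2, dif_pos]
      linarith
    · rw [redC_Q (by omega)]

lemma redC_pos (hS : 0 < S) (i : Fin (4*n+1)) : 0 < redC n S y i := by
  have hS0 : (0:ℝ) < S := by exact_mod_cast hS
  have := redC_ge (y := y) hS i
  linarith

lemma redC_nonQ_ge (hS : 0 < S) {i : Fin (4*n+1)} (h : i.val ≤ 3*n) :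
    (S:ℝ)/4 ≤ redC n S y i := by
  have hS0 : (0:ℝ) < S := by exact_mod_cast hS
  by_cases h0 : i.val = 0
  · rw [redC_zero h0]
  · have hy0 : (0:ℝ) ≤ (y ⟨i.val - 1, by omega⟩ : ℝ) := by positivity
    simp only [redC, h0, dif_neg, not_false_iff, h, dif_pos]
    linarith

lemma redW_zero {i : Fin (4*n+1)} (h : i.val = 0) : redW n S i = redT n S + 1 := by
  simp [redW, redT, h]

lemma redW_P {i : Fin (4*n+1)} (h1 : 1 ≤ i.val) (h2 : i.val ≤ 3*n) :
    redW n S i = ((n:ℝ)+1) * S := by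
  have h0 : ¬ i.val = 0 := by omega
  simp [redW, h0, h2]

lemma redW_Qw {q : ℕ} (hq : q < n) : redW n S (Qw n q hq) = ((n:ℝ)+1)*S + (q:ℝ)*S := by
  have h0 : ¬ (3*n+1+q) = 0 := by omega
  have h2 : ¬ (3*n+1+q) ≤ 3*n := by omega
  have h3 : (3*n+1+q) - (3*n+1) = q := by omega
  simp only [redW, Qw, h0, if_false, h2, h3]

lemma redW_ge (hS : 0 < S) {i : Fin (4*n+1)} (h : i.val ≠ 0) :
    ((n:ℝ)+1) * S ≤ redW n S i := by
  have hS0 : (0:ℝ) < S := by exact_mod_cast hS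
  by_cases h2 : i.val ≤ 3*n
  · rw [redW_P (by omega) h2]
  · have hq : 0 ≤ ((i.val - (3*n+1) : ℕ) : ℝ) := by positivity
    have : redW n S i = ((n:ℝ)+1)*S + ((i.val - (3*n+1) : ℕ) : ℝ) * S := by
      simp [redW, h, h2]
    rw [this]
    nlinarith

lemma dead_le (hS : 0 < S) {i : Fin (4*n+1)} (h : i.val ≠ 0) :
    redT n S - redW n S i ≤ (n:ℝ)*S + (S:ℝ)/4 := by
  have := redW_ge (n := n) hS h
  simp only [redT]
  linarith

lemma dead_P {i : Fin (4*n+1)} (h1 : 1 ≤ i.val) (h2 : i.val ≤ 3*n) :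
    redT n S - redW n S i = (n:ℝ)*S + (S:ℝ)/4 := by
  rw [redW_P h1 h2]; simp only [redT]; ring

lemma dead_Qw {q : ℕ} (hq : q < n) :
    redT n S - redW n S (Qw n q hq) = ((n:ℝ) - q)*S + (S:ℝ)/4 := by
  rw [redW_Qw hq]; simp only [redT]; ring

lemma sum_redL : ∑ i, redL n i = 4*n := by
  rw [Finset.sum_eq_single (⟨0, by omega⟩ : Fin (4*n+1))]
  · simp [redL]
  · intro b _ hb
    have : b.val ≠ 0 := by
      intro hb0; exact hb (Fin.ext hb0)
    simp [redL, this]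
  · simp

lemma filter_zero_eq :
    (Finset.univ.filter (fun i : Fin (4*n+1) => i.val = 0)) = {⟨0, by omega⟩} := by
  ext i
  simp only [Finset.mem_filter, Finset.mem_univ, true_and, Finset.mem_singleton]
  constructor
  · intro h; exact Fin.ext h
  · intro h; rw [h]

lemma card_nonzero : (Finset.univ.filter (fun i : Fin (4*n+1) => i.val ≠ 0)).card = 4*n := by
  classical
  simp only [ne_eq]
  rw [Finset.filter_not, filter_zero_eq, Finset.card_sdiff_of_subset (by simp)]
  simp

end Plat


set_option maxHeartbeats 8000000 in
/-- **The first three tasks are sent to workers among `P₁,…,P_{3n}`, and the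
fourth task is sent to worker `Q_{n-1}`.**  In the reduction instance, in any
valid schedule meeting the deadline `T = E + nS + S/4`, every master→worker
emission of rank `< 3` (i.e. preceded by fewer than three emissions) is directed
to a worker among `P₁,…,P_{3n}`, and the emission of rank `3` (the fourth one) is
directed to worker `Q_{n-1}` (worker `3n + 1 + (n-1)`). -/
theorem first_three_to_P_workers_fourth_to_Q_last
    (n S : ℕ) (hS : 0 < S) (hn : 0 < n) (y : Fin (3*n) → ℕ)
    (hy : ∀ i, S < 4 * y i ∧ 2 * y i < S)
    (σ : StarSchedule (4*n+1) (redC n S y) (redW n S) (redL n))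
    (hσ : FinishesBy σ (redT n S)) :
    ∀ k : Fin σ.nSend,
      ((Finset.univ.filter (fun k' => σ.sstart k' < σ.sstart k)).card < 3 →
        1 ≤ (σ.sdst k).val ∧ (σ.sdst k).val ≤ 3*n) ∧
      ((Finset.univ.filter (fun k' => σ.sstart k' < σ.sstart k)).card = 3 →
        σ.sdst k = ⟨3*n + 1 + (n - 1), by omega⟩) := by
  classical
  have hS0 : (0:ℝ) < S := by exact_mod_cast hS
  have hredT : redT n S = ((n:ℝ)+1)*S + (n:ℝ)*S + (S:ℝ)/4 := rfl
  -- executions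
  have hpw_ne : ∀ p, (σ.pw p).val ≠ 0 := by
    intro p h0
    have h1 := hσ p
    rw [redW_zero h0] at h1
    have h2 := σ.pstart_nonneg p
    linarith
  have hpw_inj : Function.Injective σ.pw := by
    intro p p' hpp
    by_contra hne
    have hT := hσ p
    have hT' := hσ p'
    have h0 := σ.pstart_nonneg p
    have h0' := σ.pstart_nonneg p'
    have hge := redW_ge (n := n) hS (hpw_ne p)
    rcases σ.proc_seq p p' hne hpp with h | h
    · rw [← hpp] at hT'
      rw [hredT] at hT'
      nlinarith
    · rw [← hpp] at h hT'
      rw [hredT] at hT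
      nlinarith
  have hnProc : σ.nProc = 4*n := by rw [σ.all_processed]; exact sum_redL
  have hpw_surj : ∀ i : Fin (4*n+1), i.val ≠ 0 → ∃ p, σ.pw p = i := by
    intro i hi
    have himg : Finset.univ.image σ.pw
        = Finset.univ.filter (fun j : Fin (4*n+1) => j.val ≠ 0) := by
      apply Finset.eq_of_subset_of_card_le
      · intro j hj
        simp only [Finset.mem_image] at hj
        obtain ⟨p, -, rfl⟩ := hj
        exact Finset.mem_filter.mpr ⟨Finset.mem_univ _, hpw_ne p⟩
      · rw [card_nonzero, Finset.card_image_of_injective _ hpw_inj]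
        simp [hnProc]
    have : i ∈ Finset.univ.image σ.pw := by rw [himg]; exact Finset.mem_filter.mpr ⟨Finset.mem_univ _, hi⟩
    simpa using this
  choose pex hpex using hpw_surj
  have hpdead : ∀ (i : Fin (4*n+1)) (h : i.val ≠ 0),
      σ.pstart (pex i h) ≤ redT n S - redW n S i := by
    intro i h
    have := hσ (pex i h)
    rw [hpex i h] at this
    linarith
  -- sends
  have hsinj : Function.Injective σ.sstart := by
    intro k k' hkk
    by_contra hne
    have h1 := redC_pos (y := y) hS (σ.sdst k)
    have h2 := redC_pos (y := y) hS (σ.sdst k')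
    rcases σ.oneport_out k k' hne with h | h <;> linarith
  have hseq : ∀ k k', σ.sstart k < σ.sstart k' →
      σ.sstart k + redC n S y (σ.sdst k) ≤ σ.sstart k' := by
    intro k k' hlt
    have hne : k ≠ k' := by rintro rfl; exact lt_irrefl _ hlt
    have h2 := redC_pos (y := y) hS (σ.sdst k')
    rcases σ.oneport_out k k' hne with h | h
    · exact h
    · linarith
  have hsge : ∀ k : Fin σ.nSend, (S:ℝ)/4 ≤ σ.sstart k := by
    intro k
    have h1 := σ.master_avail (σ.sstart k)
    have hne : (Finset.univ.filter
        (fun r : Fin σ.nRecv => σ.rstart r + redC n S y (σ.rsrc r) ≤ σ.sstart k)).Nonempty := by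
      rw [← Finset.card_pos]
      refine lt_of_lt_of_le ?_ h1
      exact Finset.card_pos.mpr ⟨k, by simp⟩
    obtain ⟨r1, hr1⟩ := hne
    have huniv : (Finset.univ : Finset (Fin σ.nRecv)).Nonempty := ⟨r1, Finset.mem_univ r1⟩
    obtain ⟨r0, -, hr0min⟩ := Finset.exists_min_image Finset.univ
      (fun r => σ.rstart r + redC n S y (σ.rsrc r)) huniv
    have hc0 : (S:ℝ)/4 ≤ σ.rstart r0 + redC n S y (σ.rsrc r0) := by
      by_cases h0 : (σ.rsrc r0).val = 0
      · rw [redC_zero h0]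
        have := σ.rstart_nonneg r0
        linarith
      · exfalso
        have hw := σ.worker_avail (σ.rsrc r0) (σ.rstart r0)
        have hL : redL n (σ.rsrc r0) = 0 := by simp [redL, h0]
        rw [hL, zero_add] at hw
        have hlhs : 0 < (Finset.univ.filter
            (fun r => σ.rsrc r = σ.rsrc r0 ∧ σ.rstart r ≤ σ.rstart r0)).card :=
          Finset.card_pos.mpr ⟨r0, by simp⟩
        have hrhs : 0 < (Finset.univ.filter
            (fun m => σ.sdst m = σ.rsrc r0 ∧
              σ.sstart m + redC n S y (σ.sdst m) ≤ σ.rstart r0)).card := by omega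
        obtain ⟨m, hm⟩ := Finset.card_pos.mp hrhs
        simp only [Finset.mem_filter, Finset.mem_univ, true_and] at hm
        obtain ⟨hmd, hmc⟩ := hm
        have h2 := σ.master_avail (σ.sstart m)
        have hne2 : (Finset.univ.filter
            (fun r : Fin σ.nRecv => σ.rstart r + redC n S y (σ.rsrc r) ≤ σ.sstart m)).Nonempty := by
          rw [← Finset.card_pos]
          refine lt_of_lt_of_le ?_ h2
          exact Finset.card_pos.mpr ⟨m, by simp⟩
        obtain ⟨r2, hr2⟩ := hne2
        simp only [Finset.mem_filter, Finset.mem_univ, true_and] at hr2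
        have hmin2 := hr0min r2 (Finset.mem_univ r2)
        have hcpos1 : 0 < redC n S y (σ.rsrc r0) := redC_pos hS _
        rw [hmd] at hmc
        linarith
    simp only [Finset.mem_filter, Finset.mem_univ, true_and] at hr1
    have := hr0min r1 (Finset.mem_univ r1)
    linarith
  -- required sends
  have hkap : ∀ (i : Fin (4*n+1)) (h : i.val ≠ 0),
      ∃ k, σ.sdst k = i ∧ σ.sstart k + redC n S y i ≤ σ.pstart (pex i h) := by
    intro i h
    have hw := σ.worker_avail i (σ.pstart (pex i h))
    have hL : redL n i = 0 := by simp [redL, h]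
    rw [hL, zero_add] at hw
    have hlhs : 0 < (Finset.univ.filter
        (fun p => σ.pw p = i ∧ σ.pstart p ≤ σ.pstart (pex i h))).card :=
      Finset.card_pos.mpr ⟨pex i h, by simp [hpex i h]⟩
    have hrhs : 0 < (Finset.univ.filter
        (fun k => σ.sdst k = i ∧
          σ.sstart k + redC n S y (σ.sdst k) ≤ σ.pstart (pex i h))).card := by omega
    obtain ⟨m, hm⟩ := Finset.card_pos.mp hrhs
    simp only [Finset.mem_filter, Finset.mem_univ, true_and] at hm
    refine ⟨m, hm.1, ?_⟩
    have := hm.2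
    rw [hm.1] at this
    exact this
  choose κ hκd hκc using hkap
  -- reference time and sets
  set tht : ℝ := (n:ℝ)*S + (S:ℝ)/8 with htht
  have htht0 : (0:ℝ) ≤ tht := by positivity
  set Ahat : Finset (Fin σ.nSend) :=
    Finset.univ.filter (fun k => σ.sstart k ≤ tht) with hAhatdef
  set Rhat : Finset (Fin σ.nRecv) :=
    Finset.univ.filter (fun k => σ.rstart k + redC n S y (σ.rsrc k) ≤ tht) with hRhatdef
  set RETs : Finset (Fin σ.nRecv) := Rhat.filter (fun k => (σ.rsrc k).val ≠ 0) with hRETdef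
  have hmemA : ∀ k : Fin σ.nSend, k ∈ Ahat ↔ σ.sstart k ≤ tht := by
    intro k; rw [hAhatdef]; simp
  have hmemR : ∀ k : Fin σ.nRecv,
      k ∈ Rhat ↔ σ.rstart k + redC n S y (σ.rsrc k) ≤ tht := by
    intro k; rw [hRhatdef]; simp
  have hκdead : ∀ (i : Fin (4*n+1)) (h : i.val ≠ 0),
      σ.sstart (κ i h) + redC n S y i ≤ redT n S - redW n S i := by
    intro i h
    exact le_trans (hκc i h) (hpdead i h)
  have hκA : ∀ (i : Fin (4*n+1)) (h : i.val ≠ 0), κ i h ∈ Ahat := by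
    intro i h
    rw [hmemA]
    have h1 := hκdead i h
    have h2 := dead_le (n := n) (S := S) hS h
    have h3 := redC_ge (y := y) hS i
    rw [htht]
    linarith
  -- fiber lower bound
  have hfib_lb : ∀ (i : Fin (4*n+1)) (h : i.val ≠ 0),
      (Rhat.filter (fun k => σ.rsrc k = i)).card + 1 ≤
        (Ahat.filter (fun k => σ.sdst k = i)).card := by
    intro i h
    set θ : ℝ := max (σ.pstart (pex i h)) tht with hθ
    have hw := σ.worker_avail i θ
    have hL : redL n i = 0 := by simp [redL, h]
    rw [hL, zero_add] at hw
    have hcpos : 0 < redC n S y i := redC_pos hS _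
    have hr : (Rhat.filter (fun k => σ.rsrc k = i)).card ≤
        (Finset.univ.filter (fun k => σ.rsrc k = i ∧ σ.rstart k ≤ θ)).card := by
      apply Finset.card_le_card
      intro k hk
      rw [Finset.mem_filter] at hk
      obtain ⟨hk1, hk2⟩ := hk
      rw [hmemR] at hk1
      rw [hk2] at hk1
      simp only [Finset.mem_filter, Finset.mem_univ, true_and]
      refine ⟨hk2, ?_⟩
      have : tht ≤ θ := le_max_right _ _
      linarith
    have hp : 1 ≤ (Finset.univ.filter
        (fun p => σ.pw p = i ∧ σ.pstart p ≤ θ)).card := by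
      refine Finset.card_pos.mpr ⟨pex i h, ?_⟩
      simp only [Finset.mem_filter, Finset.mem_univ, true_and]
      exact ⟨hpex i h, le_max_left _ _⟩
    have hs : (Finset.univ.filter (fun k => σ.sdst k = i ∧
        σ.sstart k + redC n S y (σ.sdst k) ≤ θ)).card ≤
        (Ahat.filter (fun k => σ.sdst k = i)).card := by
      apply Finset.card_le_card
      intro k hk
      simp only [Finset.mem_filter, Finset.mem_univ, true_and] at hk
      obtain ⟨hk1, hk2⟩ := hk
      rw [Finset.mem_filter, hmemA]
      refine ⟨?_, hk1⟩
      rw [hk1] at hk2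
      have hge : (S:ℝ)/8 ≤ redC n S y i := redC_ge hS i
      have hpd := hpdead i h
      have hdl := dead_le (n := n) (S := S) hS h
      have hmax : θ ≤ (n:ℝ)*S + (S:ℝ)/4 := by
        apply max_le
        · linarith
        · rw [htht]; linarith
      rw [htht]
      linarith
    omega
  -- fiberwise decompositions
  have hNfib : Ahat.card = ∑ i, (Ahat.filter (fun k => σ.sdst k = i)).card :=
    Finset.card_eq_sum_card_fiberwise (fun x _ => Finset.mem_univ _)
  have hRETfib : RETs.card =
      ∑ i ∈ Finset.univ.filter (fun i : Fin (4*n+1) => i.val ≠ 0),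
        (Rhat.filter (fun k => σ.rsrc k = i)).card := by
    have h1 : RETs.card =
        ∑ i ∈ Finset.univ.filter (fun i : Fin (4*n+1) => i.val ≠ 0),
          (RETs.filter (fun k => σ.rsrc k = i)).card := by
      apply Finset.card_eq_sum_card_fiberwise
      intro x hx
      rw [hRETdef, Finset.mem_coe, Finset.mem_filter] at hx
      exact Finset.mem_coe.mpr (Finset.mem_filter.mpr ⟨Finset.mem_univ _, hx.2⟩)
    rw [h1]
    apply Finset.sum_congr rfl
    intro i hi
    simp only [Finset.mem_filter, Finset.mem_univ, true_and] at hi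
    congr 1
    rw [hRETdef]
    ext k
    simp only [Finset.mem_filter]
    constructor
    · rintro ⟨⟨hk1, -⟩, hk2⟩; exact ⟨hk1, hk2⟩
    · rintro ⟨hk1, hk2⟩; exact ⟨⟨hk1, by rw [hk2]; exact hi⟩, hk2⟩
  set z : ℕ := (Ahat.filter (fun k => σ.sdst k = (⟨0, by omega⟩ : Fin (4*n+1)))).card
    with hzdef
  have hz_eq : ∑ i ∈ Finset.univ.filter (fun i : Fin (4*n+1) => ¬ i.val ≠ 0),
      (Ahat.filter (fun k => σ.sdst k = i)).card = z := by
    have : (Finset.univ.filter (fun i : Fin (4*n+1) => ¬ i.val ≠ 0))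
        = {(⟨0, by omega⟩ : Fin (4*n+1))} := by
      rw [← filter_zero_eq]
      apply Finset.filter_congr
      intro i _
      simp
    rw [this, Finset.sum_singleton, hzdef]
  have hNL_lb : 4*n + RETs.card + z ≤ Ahat.card := by
    rw [hNfib]
    rw [← Finset.sum_filter_add_sum_filter_not Finset.univ
      (fun i : Fin (4*n+1) => i.val ≠ 0)]
    have hsum_ge : 4*n + RETs.card ≤
        ∑ i ∈ Finset.univ.filter (fun i : Fin (4*n+1) => i.val ≠ 0),
          (Ahat.filter (fun k => σ.sdst k = i)).card := by
      calc 4*n + RETs.card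
          = ∑ i ∈ Finset.univ.filter (fun i : Fin (4*n+1) => i.val ≠ 0),
              ((Rhat.filter (fun k => σ.rsrc k = i)).card + 1) := by
            rw [Finset.sum_add_distrib, Finset.sum_const, card_nonzero, ← hRETfib]
            simp [Nat.add_comm]
        _ ≤ _ := by
            apply Finset.sum_le_sum
            intro i hi
            simp only [Finset.mem_filter, Finset.mem_univ, true_and] at hi
            exact hfib_lb i hi
    omega
  have hNρ : Ahat.card ≤ Rhat.card := by
    rw [hAhatdef, hRhatdef]
    exact σ.master_avail tht
  -- the split packing bound, used for `tht` itself and for pace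
  have hsplit : ∀ t : ℝ, 0 ≤ t → t ≤ tht →
      ((Finset.univ.filter
          (fun r : Fin σ.nRecv => σ.rstart r + redC n S y (σ.rsrc r) ≤ t)).card : ℝ)
        * ((S:ℝ)/4)
      - ((RETs.filter (fun r => σ.rstart r + redC n S y (σ.rsrc r) ≤ t)).card : ℝ)
        * ((S:ℝ)/8) ≤ t := by
    intro t ht0 httht
    set F : Finset (Fin σ.nRecv) :=
      Finset.univ.filter (fun r => σ.rstart r + redC n S y (σ.rsrc r) ≤ t) with hFdef
    have hmemF : ∀ r, r ∈ F ↔ σ.rstart r + redC n S y (σ.rsrc r) ≤ t := by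
      intro r; rw [hFdef]; simp
    have hpack : ∑ r ∈ F, redC n S y (σ.rsrc r) ≤ t := by
      apply interval_packing σ.rstart (fun r => redC n S y (σ.rsrc r)) F.card F le_rfl
      · intro a _ b _ hab
        exact σ.oneport_in a b hab
      · intro a _; exact redC_pos hS _
      · intro a _; exact σ.rstart_nonneg a
      · exact ht0
      · intro a ha; rw [hmemF] at ha; exact ha
    have hFsplit : F.filter (fun r => (σ.rsrc r).val ≠ 0)
        = RETs.filter (fun r => σ.rstart r + redC n S y (σ.rsrc r) ≤ t) := by
      rw [hRETdef]
      ext r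
      simp only [Finset.mem_filter, hmemF, hmemR]
      constructor
      · rintro ⟨h1, h2⟩
        exact ⟨⟨by linarith, h2⟩, h1⟩
      · rintro ⟨⟨-, h2⟩, h3⟩
        exact ⟨h3, h2⟩
    -- lower bound on the sum
    have hsum_split := Finset.sum_filter_add_sum_filter_not F
      (fun r => (σ.rsrc r).val ≠ 0) (fun r => redC n S y (σ.rsrc r))
    have hlow1 : ((F.filter (fun r => (σ.rsrc r).val ≠ 0)).card : ℝ) * ((S:ℝ)/8) ≤
        ∑ r ∈ F.filter (fun r => (σ.rsrc r).val ≠ 0), redC n S y (σ.rsrc r) := by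
      rw [← nsmul_eq_mul]
      apply Finset.card_nsmul_le_sum
      intro r _
      exact redC_ge hS _
    have hlow2 : ∑ r ∈ F.filter (fun r => ¬ (σ.rsrc r).val ≠ 0), redC n S y (σ.rsrc r)
        = ((F.filter (fun r => ¬ (σ.rsrc r).val ≠ 0)).card : ℝ) * ((S:ℝ)/4) := by
      rw [Finset.sum_congr rfl (fun r hr => ?_), Finset.sum_const, nsmul_eq_mul]
      rw [Finset.mem_filter] at hr
      exact redC_zero (by simpa using hr.2)
    have hcard_split := Finset.card_filter_add_card_filter_not
      (s := F) (p := fun r => (σ.rsrc r).val ≠ 0)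
    -- assemble
    have hcards : ((F.filter (fun r => ¬ (σ.rsrc r).val ≠ 0)).card : ℝ)
        = (F.card : ℝ) - ((F.filter (fun r => (σ.rsrc r).val ≠ 0)).card : ℝ) := by
      have : (F.filter (fun r => (σ.rsrc r).val ≠ 0)).card
          + (F.filter (fun r => ¬ (σ.rsrc r).val ≠ 0)).card = F.card := hcard_split
      push_cast [← this]
      ring
    rw [← hFsplit]
    nlinarith [hpack, hsum_split, hlow1, hlow2, hcards, hS0]
  -- key counting inequality
  have hRhat_eq : Rhat = Finset.univ.filter
      (fun r : Fin σ.nRecv => σ.rstart r + redC n S y (σ.rsrc r) ≤ tht) := hRhatdef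
  have hRETfull : RETs.filter (fun r => σ.rstart r + redC n S y (σ.rsrc r) ≤ tht) = RETs := by
    apply Finset.filter_true_of_mem
    intro r hr
    rw [hRETdef, Finset.mem_filter, hmemR] at hr
    exact hr.1
  have hkey : 2 * Rhat.card ≤ 8*n + 1 + RETs.card := by
    have h1 := hsplit tht htht0 le_rfl
    rw [← hRhat_eq, hRETfull] at h1
    by_contra hcon
    push_neg at hcon
    have hcon' : 8*n + 2 + RETs.card ≤ 2 * Rhat.card := by omega
    have hc : (8*(n:ℝ) + 2 + (RETs.card:ℝ)) ≤ 2*(Rhat.card:ℝ) := by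
      exact_mod_cast hcon'
    rw [htht] at h1
    nlinarith [hS0]
  have hRETz : RETs.card + 2*z ≤ 1 := by omega
  have hz0 : z = 0 := by omega
  -- pace bound
  have hpace : ∀ k : Fin σ.nSend, k ∈ Ahat →
      ((rkOf σ.sstart k : ℝ) + 1) * ((S:ℝ)/4) ≤ σ.sstart k
        + ((RETs.filter (fun r =>
            σ.rstart r + redC n S y (σ.rsrc r) ≤ σ.sstart k)).card : ℝ) * ((S:ℝ)/8) := by
    intro k hk
    rw [hmemA] at hk
    have h1 : rkOf σ.sstart k <
        (Finset.univ.filter (fun k' => σ.sstart k' ≤ σ.sstart k)).card :=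
      rkOf_lt_card_downset (by simp)
    have h2 := σ.master_avail (σ.sstart k)
    have h3 := hsplit (σ.sstart k) (σ.sstart_nonneg k) hk
    have h4 : ((rkOf σ.sstart k : ℝ) + 1) ≤
        ((Finset.univ.filter (fun r : Fin σ.nRecv =>
          σ.rstart r + redC n S y (σ.rsrc r) ≤ σ.sstart k)).card : ℝ) := by
      have : rkOf σ.sstart k + 1 ≤ (Finset.univ.filter (fun r : Fin σ.nRecv =>
          σ.rstart r + redC n S y (σ.rsrc r) ≤ σ.sstart k)).card := by omega
      exact_mod_cast this
    have h5 := mul_le_mul_of_nonneg_right h4 (by positivity : (0:ℝ) ≤ (S:ℝ)/4)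
    linarith
  -- classification of destinations
  have hclassify : ∀ k ∈ Ahat, (1 ≤ (σ.sdst k).val ∧ (σ.sdst k).val ≤ 3*n) ∨
      ∃ q, ∃ hq : q < n, σ.sdst k = Qw n q hq := by
    intro k hk
    have hne0 : (σ.sdst k).val ≠ 0 := by
      intro h0
      have he : σ.sdst k = (⟨0, by omega⟩ : Fin (4*n+1)) := Fin.ext h0
      have hkz : k ∈ Ahat.filter
          (fun k => σ.sdst k = (⟨0, by omega⟩ : Fin (4*n+1))) :=
        Finset.mem_filter.mpr ⟨hk, he⟩
      have : 0 < z := by rw [hzdef]; exact Finset.card_pos.mpr ⟨k, hkz⟩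
      omega
    by_cases h3 : (σ.sdst k).val ≤ 3*n
    · left; exact ⟨by omega, h3⟩
    · right
      push_neg at h3
      have hub : (σ.sdst k).val < 4*n+1 := (σ.sdst k).isLt
      refine ⟨(σ.sdst k).val - (3*n+1), by omega, ?_⟩
      apply Fin.ext
      simp only [Qw]
      omega
  rcases (by omega : RETs.card = 0 ∨ RETs.card = 1) with hRET | hRET
  · -- ### no early returns
    have hNL : Ahat.card = 4*n := by omega
    have hfib1 : ∀ (i : Fin (4*n+1)), i.val ≠ 0 →
        (Ahat.filter (fun k => σ.sdst k = i)).card = 1 := by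
      intro i hi
      by_contra hne
      have h2 : 2 ≤ (Ahat.filter (fun k => σ.sdst k = i)).card := by
        have := hfib_lb i hi; omega
      have hsum : ∑ j ∈ Finset.univ.filter (fun j : Fin (4*n+1) => j.val ≠ 0),
          (Ahat.filter (fun k => σ.sdst k = j)).card ≤ 4*n := by
        have hNfib' := hNfib
        rw [← Finset.sum_filter_add_sum_filter_not Finset.univ
          (fun j : Fin (4*n+1) => j.val ≠ 0)] at hNfib'
        omega
      have hgt : (Finset.univ.filter (fun j : Fin (4*n+1) => j.val ≠ 0)).card <
          ∑ j ∈ Finset.univ.filter (fun j : Fin (4*n+1) => j.val ≠ 0),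
            (Ahat.filter (fun k => σ.sdst k = j)).card := by
        rw [Finset.card_eq_sum_ones]
        apply Finset.sum_lt_sum
        · intro j hj
          simp only [Finset.mem_filter, Finset.mem_univ, true_and] at hj
          have := hfib_lb j hj
          omega
        · exact ⟨i, Finset.mem_filter.mpr ⟨Finset.mem_univ _, hi⟩, by omega⟩
      rw [card_nonzero] at hgt
      omega
    have huniq : ∀ (i : Fin (4*n+1)) (h : i.val ≠ 0), ∀ k ∈ Ahat, σ.sdst k = i →
        k = κ i h := by
      intro i h k hk hdk
      obtain ⟨a, ha⟩ := Finset.card_eq_one.mp (hfib1 i h)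
      have hk' : k ∈ Ahat.filter (fun k => σ.sdst k = i) :=
        Finset.mem_filter.mpr ⟨hk, hdk⟩
      have hκ' : κ i h ∈ Ahat.filter (fun k => σ.sdst k = i) :=
        Finset.mem_filter.mpr ⟨hκA i h, hκd i h⟩
      rw [ha, Finset.mem_singleton] at hk' hκ'
      rw [hk', hκ']
    have hpace0 : ∀ k ∈ Ahat, ((rkOf σ.sstart k : ℝ) + 1) * ((S:ℝ)/4) ≤ σ.sstart k := by
      intro k hk
      have h1 := hpace k hk
      have h2 : (RETs.filter (fun r =>
          σ.rstart r + redC n S y (σ.rsrc r) ≤ σ.sstart k)).card = 0 := by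
        have := Finset.card_le_card (Finset.filter_subset (fun r =>
          σ.rstart r + redC n S y (σ.rsrc r) ≤ σ.sstart k) RETs)
        omega
      rw [h2] at h1
      simpa using h1
    -- the rank enumeration
    have hsnd : ∀ m, m < 4*n → ∃ k, k ∈ Ahat ∧ rkOf σ.sstart k = m := by
      intro m hm
      obtain ⟨a, ha, hrk⟩ := rkOf_surj hsinj (t := tht) m (by rw [← hAhatdef, hNL]; exact hm)
      rw [← hAhatdef] at ha
      exact ⟨a, ha, hrk⟩
    choose snd hsndA hsndrk using hsnd
    have hchain : ∀ m m' (hm : m < 4*n) (hm' : m' < 4*n), m < m' →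
        σ.sstart (snd m hm) + redC n S y (σ.sdst (snd m hm)) ≤ σ.sstart (snd m' hm') := by
      intro m m' hm hm' hlt
      apply hseq
      apply lt_of_rkOf_lt
      rw [hsndrk m hm, hsndrk m' hm']
      exact hlt
    have hPdead0 : ∀ k ∈ Ahat, 1 ≤ (σ.sdst k).val → (σ.sdst k).val ≤ 3*n →
        σ.sstart k + redC n S y (σ.sdst k) ≤ (n:ℝ)*S + (S:ℝ)/4 := by
      intro k hk h1 h3
      have hne : (σ.sdst k).val ≠ 0 := by omega
      have hu := huniq _ hne k hk rfl
      have h2 := hκdead _ hne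
      rw [dead_P h1 h3] at h2
      calc σ.sstart k + redC n S y (σ.sdst k)
          = σ.sstart (κ (σ.sdst k) hne) + redC n S y (σ.sdst k) := by rw [← hu]
        _ ≤ _ := h2
    have hQdead0 : ∀ k ∈ Ahat, ∀ q (hq : q < n), σ.sdst k = Qw n q hq →
        σ.sstart k + (S:ℝ)/8 ≤ ((n:ℝ) - (q:ℝ))*S + (S:ℝ)/4 := by
      intro k hk q hq hdq
      have hne : (Qw n q hq).val ≠ 0 := by simp [Qw]
      have hu := huniq _ hne k hk hdq
      have h2 := hκdead _ hne
      rw [dead_Qw hq, redC_Qw hq] at h2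
      rw [hu]
      exact h2
    have hQrank : ∀ m (hm : m < 4*n) q (hq : q < n), σ.sdst (snd m hm) = Qw n q hq →
        m + 4*q + 1 ≤ 4*n := by
      intro m hm q hq hdq
      by_contra hcon
      push_neg at hcon
      have hp := hpace0 (snd m hm) (hsndA m hm)
      rw [hsndrk m hm] at hp
      have hqd := hQdead0 (snd m hm) (hsndA m hm) q hq hdq
      have hcast : 4*((n:ℝ) - (q:ℝ)) ≤ (m:ℝ) := by
        have h1 : 4*n ≤ m + 4*q := by omega
        have h2 : (4*(n:ℝ)) ≤ (m:ℝ) + 4*(q:ℝ) := by exact_mod_cast h1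
        linarith
      nlinarith [hS0, mul_le_mul_of_nonneg_right hcast (by positivity : (0:ℝ) ≤ (S:ℝ)/4)]
    -- the block-structure induction
    have hD : ∀ q, ∀ (hq : q < n) (M : ℕ) (hqM : q + M + 1 = n),
        σ.sdst (snd (4*M+3) (by omega)) = Qw n q hq ∧
        (∀ ℓ (hl1 : 4*M ≤ ℓ) (hl2 : ℓ < 4*M+3),
          1 ≤ (σ.sdst (snd ℓ (by omega))).val ∧ (σ.sdst (snd ℓ (by omega))).val ≤ 3*n) := by
      intro q
      induction q using Nat.strong_induction_on with
      | _ q ih =>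
        intro hq M hqM
        have hm3 : 4*M+3 < 4*n := by omega
        have hcastn : (n:ℝ) = (q:ℝ) + (M:ℝ) + 1 := by exact_mod_cast hqM.symm
        have hQ3 : σ.sdst (snd (4*M+3) hm3) = Qw n q hq := by
          rcases hclassify (snd (4*M+3) hm3) (hsndA _ hm3) with hP | ⟨q'', hq'', hQ⟩
          · exfalso
            have hp := hpace0 (snd (4*M+3) hm3) (hsndA _ hm3)
            rw [hsndrk _ hm3] at hp
            have hcast3 : ((4*M+3:ℕ):ℝ) + 1 = 4*((M:ℝ)+1) := by push_cast; ring
            rw [hcast3] at hp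
            rcases Nat.eq_zero_or_pos q with hq0 | hqpos
            · -- top block
              have hpd := hPdead0 _ (hsndA _ hm3) hP.1 hP.2
              have hlb := redC_P_lb hy hP.1 hP.2
              have hMn : ((M:ℝ)+1) = (n:ℝ) := by rw [hcastn, hq0]; push_cast; ring
              rw [hMn] at hp
              nlinarith [hS0]
            · -- inner block: four consecutive P-sends would overrun Q_{q-1}'s deadline
              obtain ⟨hQ7, hP7⟩ := ih (q-1) (by omega) (by omega) (M+1) (by omega)
              have hm4 : 4*M+4 < 4*n := by omega
              have hm5 : 4*M+5 < 4*n := by omega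
              have hm6 : 4*M+6 < 4*n := by omega
              have hm7 : 4*(M+1)+3 < 4*n := by omega
              have hP4 := hP7 (4*(M+1)) (by omega) (by omega)
              have hP5 := hP7 (4*(M+1)+1) (by omega) (by omega)
              have hP6 := hP7 (4*(M+1)+2) (by omega) (by omega)
              have hc3 := redC_P_lb hy hP.1 hP.2
              have hc4 := redC_P_lb hy hP4.1 hP4.2
              have hc5 := redC_P_lb hy hP5.1 hP5.2
              have hc6 := redC_P_lb hy hP6.1 hP6.2
              have h34 := hchain (4*M+3) (4*(M+1)) hm3 (by omega) (by omega)
              have h45 := hchain (4*(M+1)) (4*(M+1)+1) (by omega) (by omega) (by omega)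
              have h56 := hchain (4*(M+1)+1) (4*(M+1)+2) (by omega) (by omega) (by omega)
              have h67 := hchain (4*(M+1)+2) (4*(M+1)+3) (by omega) (by omega) (by omega)
              have hqd := hQdead0 _ (hsndA _ hm7) (q-1) (by omega) hQ7
              have hq1 : ((q-1:ℕ):ℝ) = (q:ℝ) - 1 := by
                rw [Nat.cast_sub (by omega)]; simp
              rw [hq1] at hqd
              -- (n - (q-1)) = M + 2
              have hnq : (n:ℝ) - ((q:ℝ) - 1) = (M:ℝ) + 2 := by rw [hcastn]; ring
              rw [hnq] at hqd
              nlinarith [hS0]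
          · -- it is a Q-send; identify the index
            have hr := hQrank _ hm3 q'' hq'' hQ
            have hle : q'' ≤ q := by omega
            rcases Nat.lt_or_ge q'' q with hlt | hge
            · exfalso
              obtain ⟨hQ'', -⟩ := ih q'' hlt hq'' (M + (q - q'')) (by omega)
              have hm'' : 4*(M + (q - q''))+3 < 4*n := by omega
              have hne0 : (Qw n q'' hq'').val ≠ 0 := by simp [Qw]
              have e1 := huniq _ hne0 _ (hsndA _ hm3) hQ
              have e2 := huniq _ hne0 _ (hsndA _ hm'') hQ''
              have heq : snd (4*M+3) hm3 = snd (4*(M + (q - q''))+3) hm'' := by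
                rw [e1, e2]
              have := congrArg (rkOf σ.sstart) heq
              rw [hsndrk _ hm3, hsndrk _ hm''] at this
              omega
            · have hqq : q'' = q := by omega
              subst hqq
              exact hQ
        refine ⟨hQ3, ?_⟩
        intro ℓ hl1 hl2
        have hlm : ℓ < 4*n := by omega
        rcases hclassify (snd ℓ hlm) (hsndA _ hlm) with hP | ⟨q'', hq'', hQ⟩
        · exact hP
        · exfalso
          have hr := hQrank ℓ hlm q'' hq'' hQ
          have hle : q'' ≤ q := by omega
          have hne0 : (Qw n q'' hq'').val ≠ 0 := by simp [Qw]
          rcases Nat.lt_or_ge q'' q with hlt | hge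
          · obtain ⟨hQ'', -⟩ := ih q'' hlt hq'' (M + (q - q'')) (by omega)
            have hm'' : 4*(M + (q - q''))+3 < 4*n := by omega
            have e1 := huniq _ hne0 _ (hsndA _ hlm) hQ
            have e2 := huniq _ hne0 _ (hsndA _ hm'') hQ''
            have heq : snd ℓ hlm = snd (4*(M + (q - q''))+3) hm'' := by rw [e1, e2]
            have := congrArg (rkOf σ.sstart) heq
            rw [hsndrk _ hlm, hsndrk _ hm''] at this
            omega
          · have hqq : q'' = q := by omega
            subst hqq
            have e1 := huniq _ hne0 _ (hsndA _ hlm) hQ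
            have e2 := huniq _ hne0 _ (hsndA _ hm3) hQ3
            have heq : snd ℓ hlm = snd (4*M+3) hm3 := by rw [e1, e2]
            have := congrArg (rkOf σ.sstart) heq
            rw [hsndrk _ hlm, hsndrk _ hm3] at this
            omega
    -- assemble the conclusion
    have hmem_of_rk : ∀ k : Fin σ.nSend, rkOf σ.sstart k < 4*n → k ∈ Ahat := by
      intro k hk
      by_contra hcon
      rw [hAhatdef] at hcon
      have := card_downset_le_rkOf (f := σ.sstart) (t := tht) hcon
      rw [← hAhatdef, hNL] at this
      omega
    have hk_eq_snd : ∀ (k : Fin σ.nSend) (m : ℕ) (hm : m < 4*n),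
        rkOf σ.sstart k = m → k = snd m hm := by
      intro k m hm hr
      apply rkOf_inj hsinj
      rw [hr, hsndrk m hm]
    intro k
    obtain ⟨hQtop, hPs⟩ := hD (n-1) (by omega) 0 (by omega)
    constructor
    · intro h3
      have hr3 : rkOf σ.sstart k < 3 := h3
      have hk' := hk_eq_snd k (rkOf σ.sstart k) (by omega) rfl
      have hres := hPs (rkOf σ.sstart k) (by omega) (by omega)
      rw [hk']
      exact hres
    · intro h3
      have hr3 : rkOf σ.sstart k = 3 := h3
      have hk' := hk_eq_snd k 3 (by omega) hr3
      rw [hk']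
      exact hQtop
  · -- ### one early return: impossible
    exfalso
    have hNL : Ahat.card = 4*n+1 := by omega
    obtain ⟨kstar, hkstar⟩ := Finset.card_eq_one.mp hRET
    have hkstar_mem : kstar ∈ RETs := by rw [hkstar]; simp
    have hkstarR : kstar ∈ Rhat := by
      rw [hRETdef, Finset.mem_filter] at hkstar_mem; exact hkstar_mem.1
    have histar_ne : (σ.rsrc kstar).val ≠ 0 := by
      have h := hkstar_mem
      rw [hRETdef, Finset.mem_filter] at h; exact h.2
    set istar := σ.rsrc kstar with histardef
    have hother : ∀ r ∈ Rhat, r ≠ kstar → (σ.rsrc r).val = 0 := by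
      intro r hr hne
      by_contra hc
      have hmem : r ∈ RETs := by rw [hRETdef, Finset.mem_filter]; exact ⟨hr, hc⟩
      rw [hkstar, Finset.mem_singleton] at hmem
      exact hne hmem
    have hpackR : ∑ r ∈ Rhat, redC n S y (σ.rsrc r) ≤ tht := by
      apply interval_packing σ.rstart (fun r => redC n S y (σ.rsrc r)) Rhat.card Rhat le_rfl
      · intro a _ b _ hab
        exact σ.oneport_in a b hab
      · intro a _; exact redC_pos hS _
      · intro a _; exact σ.rstart_nonneg a
      · exact htht0
      · intro a ha; exact (hmemR a).mp ha
    have hRc : Rhat.card = 4*n+1 := by omega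
    have hsum_others : ∑ r ∈ Rhat.erase kstar, redC n S y (σ.rsrc r)
        = ((Rhat.erase kstar).card : ℝ) * ((S:ℝ)/4) := by
      rw [Finset.sum_congr rfl (fun r hr => ?_), Finset.sum_const, nsmul_eq_mul]
      exact redC_zero (hother r (Finset.erase_subset _ _ hr) (Finset.ne_of_mem_erase hr))
    have hcistar_le : redC n S y istar ≤ (S:ℝ)/8 := by
      have hadd := Finset.add_sum_erase Rhat (fun r => redC n S y (σ.rsrc r)) hkstarR
      rw [← histardef] at hadd
      have hce : (Rhat.erase kstar).card = 4*n := by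
        rw [Finset.card_erase_of_mem hkstarR, hRc]
        omega
      rw [hsum_others, hce] at hadd
      have hcast : ((4*n:ℕ):ℝ) = 4*(n:ℝ) := by push_cast; ring
      rw [hcast] at hadd
      rw [htht] at hpackR
      nlinarith [hS0]
    have histarQ : 3*n < istar.val := by
      by_contra hc
      push_neg at hc
      have := redC_P_lb (y := y) hy (by omega) hc
      linarith [hS0]
    have hqstar_lt : istar.val - (3*n+1) < n := by have := istar.isLt; omega
    set qstar := istar.val - (3*n+1) with hqstardef
    have histar_eq : istar = Qw n qstar hqstar_lt := by
      apply Fin.ext; simp only [Qw]; omega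
    have hcistar : redC n S y istar = (S:ℝ)/8 := redC_Q histarQ
    have hkcomp : σ.rstart kstar + (S:ℝ)/8 ≤ tht := by
      have := (hmemR kstar).mp hkstarR
      rw [← histardef, hcistar] at this
      exact this
    have hfibsum : ∑ j ∈ Finset.univ.filter (fun j : Fin (4*n+1) => j.val ≠ 0),
        (Ahat.filter (fun k => σ.sdst k = j)).card = 4*n+1 := by
      have h1 := hNfib
      rw [← Finset.sum_filter_add_sum_filter_not Finset.univ
        (fun j : Fin (4*n+1) => j.val ≠ 0), hz_eq] at h1
      omega
    have hret : ∀ j : Fin (4*n+1), j.val ≠ 0 →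
        (Rhat.filter (fun r => σ.rsrc r = j)).card = (if j = istar then 1 else 0) := by
      intro j hj
      by_cases hji : j = istar
      · subst hji; rw [if_pos rfl]
        rw [Finset.card_eq_one]
        refine ⟨kstar, ?_⟩
        ext r
        simp only [Finset.mem_filter, Finset.mem_singleton]
        constructor
        · rintro ⟨hr1, hr2⟩
          by_contra hne
          have := hother r hr1 hne
          rw [hr2] at this
          exact histar_ne this
        · rintro rfl
          exact ⟨hkstarR, histardef.symm⟩
      · rw [if_neg hji]
        rw [Finset.card_eq_zero, Finset.eq_empty_iff_forall_notMem]
        intro r hr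
        rw [Finset.mem_filter] at hr
        rcases eq_or_ne r kstar with rfl | hne
        · exact hji (histardef.trans hr.2).symm
        · have := hother r hr.1 hne
          rw [hr.2] at this
          exact hj this
    have hfibeq : ∀ (j : Fin (4*n+1)), j.val ≠ 0 →
        (Ahat.filter (fun k => σ.sdst k = j)).card
          = (Rhat.filter (fun r => σ.rsrc r = j)).card + 1 := by
      by_contra hcon
      push_neg at hcon
      obtain ⟨j, hj, hnej⟩ := hcon
      have hlt : ∑ j' ∈ Finset.univ.filter (fun j' : Fin (4*n+1) => j'.val ≠ 0),
          ((Rhat.filter (fun r => σ.rsrc r = j')).card + 1) <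
          ∑ j' ∈ Finset.univ.filter (fun j' : Fin (4*n+1) => j'.val ≠ 0),
          (Ahat.filter (fun k => σ.sdst k = j')).card := by
        apply Finset.sum_lt_sum
        · intro j' hj'
          simp only [Finset.mem_filter, Finset.mem_univ, true_and] at hj'
          exact hfib_lb j' hj'
        · refine ⟨j, Finset.mem_filter.mpr ⟨Finset.mem_univ _, hj⟩, ?_⟩
          have := hfib_lb j hj
          omega
      rw [Finset.sum_add_distrib, ← hRETfib, Finset.sum_const, card_nonzero, hfibsum,
        hRET] at hlt
      simp only [smul_eq_mul, mul_one] at hlt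
      omega
    have hfib_istar : (Ahat.filter (fun k => σ.sdst k = istar)).card = 2 := by
      rw [hfibeq istar histar_ne, hret istar histar_ne, if_pos rfl]
    have hfib_one : ∀ (j : Fin (4*n+1)), j.val ≠ 0 → j ≠ istar →
        (Ahat.filter (fun k => σ.sdst k = j)).card = 1 := by
      intro j hj hji
      rw [hfibeq j hj, hret j hj, if_neg hji]
    have huniq1 : ∀ (i : Fin (4*n+1)) (h : i.val ≠ 0), i ≠ istar →
        ∀ k ∈ Ahat, σ.sdst k = i → k = κ i h := by
      intro i h hne k hk hdk
      obtain ⟨a, ha⟩ := Finset.card_eq_one.mp (hfib_one i h hne)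
      have hk' : k ∈ Ahat.filter (fun k => σ.sdst k = i) :=
        Finset.mem_filter.mpr ⟨hk, hdk⟩
      have hκ' : κ i h ∈ Ahat.filter (fun k => σ.sdst k = i) :=
        Finset.mem_filter.mpr ⟨hκA i h, hκd i h⟩
      rw [ha, Finset.mem_singleton] at hk' hκ'
      rw [hk', hκ']
    -- pace with a possible one-unit boost
    have hpace1 : ∀ k ∈ Ahat,
        (σ.rstart kstar + (S:ℝ)/8 ≤ σ.sstart k →
          ((rkOf σ.sstart k : ℝ) + 1) * ((S:ℝ)/4) ≤ σ.sstart k + (S:ℝ)/8) ∧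
        (¬ (σ.rstart kstar + (S:ℝ)/8 ≤ σ.sstart k) →
          ((rkOf σ.sstart k : ℝ) + 1) * ((S:ℝ)/4) ≤ σ.sstart k) := by
      intro k hk
      have h1 := hpace k hk
      constructor
      · intro _
        have hle : (RETs.filter (fun r =>
            σ.rstart r + redC n S y (σ.rsrc r) ≤ σ.sstart k)).card ≤ 1 := by
          have := Finset.card_le_card (Finset.filter_subset (fun r =>
            σ.rstart r + redC n S y (σ.rsrc r) ≤ σ.sstart k) RETs)
          omega
        have hGle : ((RETs.filter (fun r =>
            σ.rstart r + redC n S y (σ.rsrc r) ≤ σ.sstart k)).card : ℝ) ≤ 1 := by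
          exact_mod_cast hle
        nlinarith [hS0]
      · intro hb
        have hG0 : (RETs.filter (fun r =>
            σ.rstart r + redC n S y (σ.rsrc r) ≤ σ.sstart k)).card = 0 := by
          rw [Finset.card_eq_zero, Finset.filter_eq_empty_iff]
          intro r hr
          rw [hkstar, Finset.mem_singleton] at hr
          subst hr
          rw [← histardef, hcistar]
          exact hb
        rw [hG0] at h1
        simpa using h1
    -- the top-rank send starts exactly at tht, after the return
    have hsnd1 : ∀ m, m < 4*n+1 → ∃ k, k ∈ Ahat ∧ rkOf σ.sstart k = m := by
      intro m hm
      obtain ⟨a, ha, hrk⟩ := rkOf_surj hsinj (t := tht) m (by rw [← hAhatdef, hNL]; exact hm)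
      rw [← hAhatdef] at ha
      exact ⟨a, ha, hrk⟩
    obtain ⟨ktop, hktopA, hktoprk⟩ := hsnd1 (4*n) (by omega)
    have hstop_le : σ.sstart ktop ≤ tht := (hmemA ktop).mp hktopA
    have hcast4n : ((4*n:ℕ):ℝ) = 4*(n:ℝ) := by push_cast; ring
    have hboost_top : σ.rstart kstar + (S:ℝ)/8 ≤ σ.sstart ktop ∧ σ.sstart ktop = tht := by
      rcases le_or_gt (σ.rstart kstar + (S:ℝ)/8) (σ.sstart ktop) with hb | hb
      · refine ⟨hb, ?_⟩
        have h1 := (hpace1 ktop hktopA).1 hb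
        rw [hktoprk, hcast4n] at h1
        have h2 : tht ≤ σ.sstart ktop := by rw [htht]; nlinarith [hS0]
        exact le_antisymm hstop_le h2
      · exfalso
        have h1 := (hpace1 ktop hktopA).2 (not_le.mpr hb)
        rw [hktoprk, hcast4n] at h1
        rw [htht] at hstop_le
        nlinarith [hS0]
    obtain ⟨hbtop, hstop⟩ := hboost_top
    -- the enabling send for the return
    have he1 : ∃ e1, σ.sdst e1 = istar ∧
        σ.sstart e1 + redC n S y istar ≤ σ.rstart kstar := by
      have hw := σ.worker_avail istar (σ.rstart kstar)
      have hL : redL n istar = 0 := by simp [redL, histar_ne]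
      rw [hL, zero_add] at hw
      have hlhs : 0 < (Finset.univ.filter
          (fun r => σ.rsrc r = istar ∧ σ.rstart r ≤ σ.rstart kstar)).card := by
        exact Finset.card_pos.mpr ⟨kstar,
          Finset.mem_filter.mpr ⟨Finset.mem_univ _, histardef.symm, le_refl _⟩⟩
      have hrhs : 0 < (Finset.univ.filter (fun k => σ.sdst k = istar ∧
          σ.sstart k + redC n S y (σ.sdst k) ≤ σ.rstart kstar)).card := by omega
      obtain ⟨m, hm⟩ := Finset.card_pos.mp hrhs
      simp only [Finset.mem_filter, Finset.mem_univ, true_and] at hm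
      refine ⟨m, hm.1, ?_⟩
      have := hm.2
      rw [hm.1] at this
      exact this
    obtain ⟨e1, he1d, he1c⟩ := he1
    rw [hcistar] at he1c
    have he1A : e1 ∈ Ahat := by
      rw [hmemA]
      linarith [hkcomp, hS0]
    have he1top : e1 ≠ ktop := by
      intro h
      rw [h, hstop] at he1c
      linarith [hkcomp, hS0]
    -- deadline for istar's execution
    have hpst : σ.pstart (pex istar histar_ne) ≤ ((n:ℝ) - (qstar:ℝ))*S + (S:ℝ)/4 := by
      have hwi : redW n S istar = ((n:ℝ)+1)*S + (qstar:ℝ)*S := by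
        rw [histar_eq]; exact redW_Qw hqstar_lt
      have h1 := hpdead istar histar_ne
      rw [hwi, hredT] at h1
      linarith
    -- both sends to istar complete before max(return start, execution start)
    have htheta : 1 ≤ qstar → ∀ b ∈ Ahat, σ.sdst b = istar →
        σ.sstart b + (S:ℝ)/8 ≤
          max (σ.rstart kstar) (σ.pstart (pex istar histar_ne)) := by
      intro hq1 b hb hdb
      have hq1' : (1:ℝ) ≤ (qstar:ℝ) := by exact_mod_cast hq1
      have hθle : max (σ.rstart kstar) (σ.pstart (pex istar histar_ne)) ≤ (n:ℝ)*S := by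
        apply max_le
        · rw [htht] at hkcomp; linarith
        · nlinarith [hpst, hS0, hq1']
      have hw := σ.worker_avail istar
        (max (σ.rstart kstar) (σ.pstart (pex istar histar_ne)))
      have hL : redL n istar = 0 := by simp [redL, histar_ne]
      rw [hL, zero_add] at hw
      have hr2 : 0 < (Finset.univ.filter (fun r => σ.rsrc r = istar ∧
          σ.rstart r ≤ max (σ.rstart kstar) (σ.pstart (pex istar histar_ne)))).card := by
        exact Finset.card_pos.mpr ⟨kstar,
          Finset.mem_filter.mpr ⟨Finset.mem_univ _, histardef.symm, le_max_left _ _⟩⟩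
      have hp2 : 0 < (Finset.univ.filter (fun p => σ.pw p = istar ∧
          σ.pstart p ≤ max (σ.rstart kstar) (σ.pstart (pex istar histar_ne)))).card := by
        refine Finset.card_pos.mpr ⟨pex istar histar_ne, ?_⟩
        simp only [Finset.mem_filter, Finset.mem_univ, true_and]
        exact ⟨hpex istar histar_ne, le_max_right _ _⟩
      have hsend2 : 2 ≤ (Finset.univ.filter (fun k => σ.sdst k = istar ∧
          σ.sstart k + redC n S y (σ.sdst k) ≤
            max (σ.rstart kstar) (σ.pstart (pex istar histar_ne)))).card := by omega
      have hsub : Finset.univ.filter (fun k => σ.sdst k = istar ∧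
          σ.sstart k + redC n S y (σ.sdst k) ≤
            max (σ.rstart kstar) (σ.pstart (pex istar histar_ne)))
          ⊆ Ahat.filter (fun k => σ.sdst k = istar) := by
        intro x hx
        simp only [Finset.mem_filter, Finset.mem_univ, true_and] at hx
        rw [Finset.mem_filter, hmemA]
        refine ⟨?_, hx.1⟩
        have hxc := hx.2
        rw [hx.1, hcistar] at hxc
        rw [htht]
        linarith [hθle, hS0]
      have hEq := Finset.eq_of_subset_of_card_le hsub (by rw [hfib_istar]; omega)
      have hbfib : b ∈ Ahat.filter (fun k => σ.sdst k = istar) :=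
        Finset.mem_filter.mpr ⟨hb, hdb⟩
      rw [← hEq] at hbfib
      simp only [Finset.mem_filter, Finset.mem_univ, true_and] at hbfib
      have hbc := hbfib.2
      rw [hdb, hcistar] at hbc
      exact hbc
    -- destination of the top send is Q_0
    have hdst_top : σ.sdst ktop = Qw n 0 hn := by
      rcases hclassify ktop hktopA with hP | ⟨q', hq', hQ⟩
      · exfalso
        have hne : (σ.sdst ktop).val ≠ 0 := by omega
        have hdiff : σ.sdst ktop ≠ istar := by
          intro h
          have := hP.2
          rw [h] at this
          omega
        have hu := huniq1 _ hne hdiff ktop hktopA rfl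
        have h2 := hκdead _ hne
        rw [dead_P hP.1 hP.2] at h2
        have hlb := redC_P_lb hy hP.1 hP.2
        have h3 : σ.sstart ktop + redC n S y (σ.sdst ktop) ≤ (n:ℝ)*S + (S:ℝ)/4 := by
          calc σ.sstart ktop + redC n S y (σ.sdst ktop)
              = σ.sstart (κ (σ.sdst ktop) hne) + redC n S y (σ.sdst ktop) := by rw [← hu]
            _ ≤ _ := h2
        rw [hstop, htht] at h3
        linarith
      · by_cases hti : σ.sdst ktop = istar
        · -- q' = qstar; qstar must be 0
          have hval : q' = qstar := by
            have h1 := congrArg Fin.val hQ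
            have h2 := congrArg Fin.val histar_eq
            simp only [Qw] at h1 h2
            omega
          rcases Nat.eq_zero_or_pos qstar with hq0 | hq1
          · rw [hQ]
            apply Fin.ext
            simp only [Qw]
            omega
          · exfalso
            have hth := htheta hq1 ktop hktopA hti
            have hmx : max (σ.rstart kstar) (σ.pstart (pex istar histar_ne)) ≤ (n:ℝ)*S := by
              apply max_le
              · rw [htht] at hkcomp; linarith
              · have hq1' : (1:ℝ) ≤ (qstar:ℝ) := by exact_mod_cast hq1
                nlinarith [hpst, hS0, hq1']
            rw [hstop, htht] at hth
            linarith [hS0]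
        · -- the unique send to Qw q' : deadline forces q' = 0
          have hne : (Qw n q' hq').val ≠ 0 := by simp [Qw]
          have hdiff : Qw n q' hq' ≠ istar := by
            intro h; rw [← h] at hti; exact hti hQ
          have hu := huniq1 _ hne hdiff ktop hktopA hQ
          have h2 := hκdead _ hne
          rw [dead_Qw hq', redC_Qw hq'] at h2
          rw [← hu, hstop, htht] at h2
          have hq'0 : q' = 0 := by
            by_contra hq'ne
            have : (1:ℝ) ≤ (q':ℝ) := by
              exact_mod_cast Nat.one_le_iff_ne_zero.mpr hq'ne
            nlinarith [hS0]
          subst hq'0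
          rw [hQ]
    -- the rank 4n-1 send
    obtain ⟨k1, hk1A, hk1rk⟩ := hsnd1 (4*n-1) (by omega)
    have hk1top : k1 ≠ ktop := by
      intro h
      rw [h, hktoprk] at hk1rk
      omega
    have hs1lt : σ.sstart k1 < σ.sstart ktop := by
      apply lt_of_rkOf_lt
      rw [hk1rk, hktoprk]
      omega
    have hk1comp : σ.sstart k1 + redC n S y (σ.sdst k1) ≤ tht := by
      have := hseq k1 ktop hs1lt
      rw [hstop] at this
      exact this
    have hcast4n1 : ((4*n-1:ℕ):ℝ) + 1 = 4*(n:ℝ) := by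
      have h1 : (4*n-1:ℕ) + 1 = 4*n := by omega
      have h2 : ((4*n-1:ℕ):ℝ) + 1 = ((4*n:ℕ):ℝ) := by exact_mod_cast h1
      rw [h2, hcast4n]
    have hpace_k1 : ((n:ℝ)*S - (S:ℝ)/8 ≤ σ.sstart k1) ∧
        (¬ (σ.rstart kstar + (S:ℝ)/8 ≤ σ.sstart k1) → (n:ℝ)*S ≤ σ.sstart k1) := by
      constructor
      · rcases le_or_gt (σ.rstart kstar + (S:ℝ)/8) (σ.sstart k1) with hb | hb
        · have h1 := (hpace1 k1 hk1A).1 hb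
          rw [hk1rk, hcast4n1] at h1
          nlinarith [hS0]
        · have h1 := (hpace1 k1 hk1A).2 (not_le.mpr hb)
          rw [hk1rk, hcast4n1] at h1
          nlinarith [hS0]
      · intro hb
        have h1 := (hpace1 k1 hk1A).2 hb
        rw [hk1rk, hcast4n1] at h1
        nlinarith [hS0]
    -- common contradictions
    have hek1_contra : e1 = k1 → False := by
      intro he
      rw [he] at he1c
      rcases le_or_gt (σ.rstart kstar + (S:ℝ)/8) (σ.sstart k1) with hb | hb
      · linarith [hS0]
      · have h2 := hpace_k1.2 (not_le.mpr hb)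
        rw [htht] at hkcomp
        linarith [hS0]
    have hpair_contra : σ.sdst k1 = istar → σ.sdst ktop = istar → False := by
      intro h1 h2
      have hpair : ({k1, ktop} : Finset (Fin σ.nSend)) ⊆
          Ahat.filter (fun k => σ.sdst k = istar) := by
        intro x hx
        simp only [Finset.mem_insert, Finset.mem_singleton] at hx
        rcases hx with rfl | rfl
        · exact Finset.mem_filter.mpr ⟨hk1A, h1⟩
        · exact Finset.mem_filter.mpr ⟨hktopA, h2⟩
      have hcard2 : ({k1, ktop} : Finset (Fin σ.nSend)).card = 2 := by
        rw [Finset.card_insert_of_notMem (by simp [hk1top]), Finset.card_singleton]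
      have hEq := Finset.eq_of_subset_of_card_le hpair (by rw [hfib_istar, hcard2])
      have he1f : e1 ∈ Ahat.filter (fun k => σ.sdst k = istar) :=
        Finset.mem_filter.mpr ⟨he1A, he1d⟩
      rw [← hEq] at he1f
      simp only [Finset.mem_insert, Finset.mem_singleton] at he1f
      rcases he1f with h | h
      · exact hek1_contra h
      · exact he1top h
    -- classify k1's destination and derive the contradiction
    rcases hclassify k1 hk1A with hP | ⟨q', hq', hQ⟩
    · have hlb := redC_P_lb hy hP.1 hP.2
      rw [htht] at hk1comp
      linarith [hpace_k1.1, hS0]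
    · have hQw_ne0 : (Qw n q' hq').val ≠ 0 := by simp [Qw]
      by_cases hdiff : Qw n q' hq' = istar
      · -- k1 is a send to istar
        have hdk1 : σ.sdst k1 = istar := by rw [hQ]; exact hdiff
        rcases Nat.eq_zero_or_pos qstar with hq0 | hq1
        · -- istar = Q_0 = destination of ktop
          have hdkt : σ.sdst ktop = istar := by
            rw [hdst_top, histar_eq]
            apply Fin.ext
            simp only [Qw]
            omega
          exact hpair_contra hdk1 hdkt
        · -- qstar ≥ 1 : theta bound is violated
          have hth := htheta hq1 k1 hk1A hdk1
          rcases le_or_gt (σ.rstart kstar + (S:ℝ)/8) (σ.sstart k1) with hb | hb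
          · have hq1' : (1:ℝ) ≤ (qstar:ℝ) := by exact_mod_cast hq1
            rcases max_cases (σ.rstart kstar) (σ.pstart (pex istar histar_ne)) with
              ⟨hmx, -⟩ | ⟨hmx, -⟩ <;> rw [hmx] at hth
            · linarith [hS0]
            · nlinarith [hpst, hpace_k1.1, hS0, hq1']
          · have h2 := hpace_k1.2 (not_le.mpr hb)
            have hmx : max (σ.rstart kstar) (σ.pstart (pex istar histar_ne)) ≤ (n:ℝ)*S := by
              apply max_le
              · rw [htht] at hkcomp; linarith
              · have hq1' : (1:ℝ) ≤ (qstar:ℝ) := by exact_mod_cast hq1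
                nlinarith [hpst, hS0, hq1']
            linarith [hS0]
      · -- k1 is the unique (required) send to Qw q'
        have hu := huniq1 _ hQw_ne0 hdiff k1 hk1A hQ
        have h2 := hκdead _ hQw_ne0
        rw [dead_Qw hq', redC_Qw hq'] at h2
        rw [← hu] at h2
        have hq'0 : q' = 0 := by
          by_contra hq'ne
          have : (1:ℝ) ≤ (q':ℝ) := by
            exact_mod_cast Nat.one_le_iff_ne_zero.mpr hq'ne
          nlinarith [hpace_k1.1, hS0]
        subst hq'0
        -- both k1 and ktop are sends to Q_0, so Q_0 = istar
        have hdkt0 : σ.sdst ktop = Qw n 0 hq' := hdst_top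
        by_cases h0i : Qw n 0 hq' = istar
        · exact hpair_contra (by rw [hQ]; exact h0i) (by rw [hdkt0]; exact h0i)
        · have h1 := hfib_one (Qw n 0 hq') hQw_ne0 h0i
          obtain ⟨a, ha⟩ := Finset.card_eq_one.mp h1
          have hk1f : k1 ∈ Ahat.filter (fun k => σ.sdst k = Qw n 0 hq') :=
            Finset.mem_filter.mpr ⟨hk1A, hQ⟩
          have hktf : ktop ∈ Ahat.filter (fun k => σ.sdst k = Qw n 0 hq') :=
            Finset.mem_filter.mpr ⟨hktopA, hdkt0⟩
          rw [ha, Finset.mem_singleton] at hk1f hktf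
          exact hk1top (hk1f.trans hktf.symm)
end

section
/- On a fully homogeneous star platform (c_i = c and w_i = w for all workers), in every iteration i the Best-Balance Algorithm chooses as receiver of the i-th redistributed task a worker that, among all workers, finishes processing first the load it holds after iteration i−1. -/
/-- If `b < a` then `max b A ≤ max a A`, so a non-strict inequality the other way is a tie. -/
theorem le_of_max_le_max_of_tie {α : Type*} [LinearOrder α] {a b A : α}
    (h : max a A ≤ max b A) (htie : max b A = max a A → a ≤ b) : a ≤ b := by
  by_contra! hba
  exact hba.not_ge (htie (le_antisymm (max_le_max_right A hba.le) h))

theorem bba_receiver_finishes_first_general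
    (m : ℕ) (c w : ℝ)
    (endt : Fin m → ℝ) (masterIn masterOut : ℝ) (r : Fin m)
    (hmin : ∀ k : Fin m,
      max (endt r) (max (masterIn + c) masterOut + c) + w ≤
        max (endt k) (max (masterIn + c) masterOut + c) + w)
    (htie : ∀ k : Fin m,
      max (endt k) (max (masterIn + c) masterOut + c) + w =
        max (endt r) (max (masterIn + c) masterOut + c) + w →
      endt r ≤ endt k) :
    ∀ k : Fin m, endt r ≤ endt k := fun k =>
  le_of_max_le_max_of_tie (le_of_add_le_add_right (hmin k))
    fun heq => htie k (congrArg (· + w) heq)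

/-- **In each iteration, the Best-Balance Algorithm chooses as receiver a worker
that finishes processing first.**  On a fully homogeneous star platform (all
links have per-task communication time `c`, all workers per-task computation time
`w`), consider an iteration of BBA: `endt k` is the finish time of worker `k`
after the previous iteration, and the task to be redistributed arrives at a
worker at time `A = max (masterIn + c) masterOut + c`, so that worker `k` would
finish it at the temporary finish time `max (endt k) A + w`.  If `r` is the
worker chosen by BBA — a worker with minimal temporary finish time, ties broken
by minimal `endt` — then `r` finishes processing first among all workers:
`endt r ≤ endt k` for every `k`. -/
theorem bba_receiver_finishes_first
    (m : ℕ) (c w : ℝ) (hc : 0 < c) (hw : 0 < w)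
    (endt : Fin m → ℝ) (masterIn masterOut : ℝ) (r : Fin m)
    (hmin : ∀ k : Fin m,
      max (endt r) (max (masterIn + c) masterOut + c) + w ≤
        max (endt k) (max (masterIn + c) masterOut + c) + w)
    (htie : ∀ k : Fin m,
      max (endt k) (max (masterIn + c) masterOut + c) + w =
        max (endt r) (max (masterIn + c) masterOut + c) + w →
      endt r ≤ endt k) :
    ∀ k : Fin m, endt r ≤ endt k :=
  bba_receiver_finishes_first_general m c w endt masterIn masterOut r hmin htie
end

section
/- On a star platform with homogeneous communication links (all per-task communication times equal to c), if there exists a valid schedule S with makespan M, then there exists a valid schedule S' with makespan M' ≤ M in which no worker both sends tasks and receives tasks. -/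
open scoped Classical

open Finset


-- upper bound helper
lemma exists_ub {n : ℕ} (f : Fin n → ℝ) : ∃ t : ℝ, ∀ k, f k ≤ t :=
  ⟨(insert (0:ℝ) (univ.image f)).max' (insert_nonempty _ _),
   fun k => le_max' _ _ (mem_insert_of_mem (mem_image_of_mem f (mem_univ k)))⟩

-- order statistic counting lemma
lemma orderEmb_le_iff {s : Finset ℝ} {N : ℕ} (h : s.card = N) (q : Fin N) (t : ℝ) :
    s.orderEmbOfFin h q ≤ t ↔ (q : ℕ) < (s.filter (fun x => x ≤ t)).card := by
  rw [← Tuple.lt_card_le_iff_apply_le_of_monotone (f := s.orderEmbOfFin h) (a := t)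
      (s.orderEmbOfFin h).monotone (j := q)]
  have himg : (univ.filter (fun i : Fin N => s.orderEmbOfFin h i ≤ t)).image (s.orderEmbOfFin h)
      = s.filter (fun x => x ≤ t) := by
    ext x
    simp only [mem_image, mem_filter, mem_univ, true_and]
    constructor
    · rintro ⟨i, hi, rfl⟩
      exact ⟨s.orderEmbOfFin_mem h i, hi⟩
    · rintro ⟨hx, hxt⟩
      have : x ∈ Set.range (s.orderEmbOfFin h) := by
        rw [s.range_orderEmbOfFin h]; exact hx
      obtain ⟨i, rfl⟩ := this
      exact ⟨i, hxt, rfl⟩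
  rw [← himg, card_image_of_injective _ (s.orderEmbOfFin h).injective]

-- filter card through injective image
lemma card_filter_image_injOn {α : Type*} [DecidableEq α] (s : Finset α) (f : α → ℝ)
    (hf : Set.InjOn f s) (p : ℝ → Prop) [DecidablePred p] :
    ((s.image f).filter p).card = (s.filter (fun a => p (f a))).card := by
  rw [Finset.filter_image, card_image_of_injOn (hf.mono (by exact_mod_cast filter_subset _ s))]

namespace NB

noncomputable section

variable {m : ℕ} {c : ℝ} {w : Fin m → ℝ} {L : Fin m → ℕ}

def sC (σ : StarSchedule m (fun _ => c) w L) (i : Fin m) : ℕ :=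
  (Finset.univ.filter (fun k => σ.rsrc k = i)).card

def rC (σ : StarSchedule m (fun _ => c) w L) (i : Fin m) : ℕ :=
  (Finset.univ.filter (fun k => σ.sdst k = i)).card

def pC (σ : StarSchedule m (fun _ => c) w L) (i : Fin m) : ℕ :=
  (Finset.univ.filter (fun p => σ.pw p = i)).card

def pCt (σ : StarSchedule m (fun _ => c) w L) (i : Fin m) (t : ℝ) : ℕ :=
  (Finset.univ.filter (fun p => σ.pw p = i ∧ σ.pstart p ≤ t)).card

lemma sum_sC (σ : StarSchedule m (fun _ => c) w L) : ∑ i, sC σ i = σ.nRecv := by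
  rw [show σ.nRecv = (univ : Finset (Fin σ.nRecv)).card by simp]
  exact (card_eq_sum_card_fiberwise (fun x _ => mem_univ (σ.rsrc x))).symm

lemma sum_rC (σ : StarSchedule m (fun _ => c) w L) : ∑ i, rC σ i = σ.nSend := by
  rw [show σ.nSend = (univ : Finset (Fin σ.nSend)).card by simp]
  exact (card_eq_sum_card_fiberwise (fun x _ => mem_univ (σ.sdst x))).symm

lemma sum_pC (σ : StarSchedule m (fun _ => c) w L) : ∑ i, pC σ i = σ.nProc := by
  rw [show σ.nProc = (univ : Finset (Fin σ.nProc)).card by simp]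
  exact (card_eq_sum_card_fiberwise (fun x _ => mem_univ (σ.pw x))).symm

lemma rstart_inj (σ : StarSchedule m (fun _ => c) w L) (hc : 0 < c) :
    Function.Injective σ.rstart := by
  intro a b hab
  by_contra hne
  have h := σ.oneport_in a b hne
  simp only [hab] at h
  rcases h with h | h <;> linarith

lemma sstart_inj (σ : StarSchedule m (fun _ => c) w L) (hc : 0 < c) :
    Function.Injective σ.sstart := by
  intro a b hab
  by_contra hne
  have h := σ.oneport_out a b hne
  simp only [hab] at h
  rcases h with h | h <;> linarith

lemma pstart_injOn (σ : StarSchedule m (fun _ => c) w L) (hw : ∀ i, 0 < w i) (i : Fin m) :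
    Set.InjOn σ.pstart (univ.filter (fun p => σ.pw p = i)) := by
  intro a ha b hb hab
  simp only [coe_filter, Set.mem_setOf_eq] at ha hb
  by_contra hne
  have h := σ.proc_seq a b hne (ha.2.trans hb.2.symm)
  have := hw (σ.pw a); have := hw (σ.pw b)
  rcases h with h | h <;> linarith

lemma tight (σ : StarSchedule m (fun _ => c) w L) (hc : 0 < c) :
    ∀ i, sC σ i + pC σ i = L i + rC σ i := by
  obtain ⟨t1, ht1⟩ := exists_ub σ.rstart
  obtain ⟨t2, ht2⟩ := exists_ub (fun k => σ.sstart k + c)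
  obtain ⟨t3, ht3⟩ := exists_ub σ.pstart
  obtain ⟨t4, ht4⟩ := exists_ub (fun k => σ.rstart k + c)
  set t := max (max t1 t4) (max t2 t3) with hT
  have hr : ∀ k, σ.rstart k ≤ t :=
    fun k => (ht1 k).trans ((le_max_left _ _).trans (le_max_left _ _))
  have hrc : ∀ k, σ.rstart k + c ≤ t :=
    fun k => (ht4 k).trans ((le_max_right _ _).trans (le_max_left _ _))
  have hs : ∀ k, σ.sstart k + c ≤ t :=
    fun k => (ht2 k).trans ((le_max_left _ _).trans (le_max_right _ _))
  have hp : ∀ p, σ.pstart p ≤ t :=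
    fun p => (ht3 p).trans ((le_max_right _ _).trans (le_max_right _ _))
  have hwa : ∀ i, sC σ i + pC σ i ≤ L i + rC σ i := by
    intro i
    have h := σ.worker_avail i t
    have e1 : (univ.filter (fun k => σ.rsrc k = i ∧ σ.rstart k ≤ t)) =
        (univ.filter (fun k => σ.rsrc k = i)) := by
      apply filter_congr; intro k _; simp [hr k]
    have e2 : (univ.filter (fun p => σ.pw p = i ∧ σ.pstart p ≤ t)) =
        (univ.filter (fun p => σ.pw p = i)) := by
      apply filter_congr; intro p _; simp [hp p]
    have e3 : (univ.filter (fun k => σ.sdst k = i ∧ σ.sstart k + (fun _ => c) (σ.sdst k) ≤ t)) =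
        (univ.filter (fun k => σ.sdst k = i)) := by
      apply filter_congr; intro k _; simp [hs k]
    rw [e1, e2, e3] at h
    exact h
  have hma : σ.nSend ≤ σ.nRecv := by
    have h := σ.master_avail t
    have e1 : (univ.filter (fun k => σ.sstart k ≤ t)) = (univ : Finset (Fin σ.nSend)) := by
      apply filter_true_of_mem; intro k _
      have := hs k; linarith
    have e2 : (univ.filter (fun k => σ.rstart k + (fun _ => c) (σ.rsrc k) ≤ t)) =
        (univ : Finset (Fin σ.nRecv)) := by
      apply filter_true_of_mem; intro k _
      exact hrc k
    rw [e1, e2] at h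
    simpa using h
  have hsum : ∑ i, (sC σ i + pC σ i) = ∑ i, (L i + rC σ i) := by
    have h1 : ∑ i, (sC σ i + pC σ i) = σ.nRecv + σ.nProc := by
      rw [Finset.sum_add_distrib, sum_sC, sum_pC]
    have h2 : ∑ i, (L i + rC σ i) = σ.nProc + σ.nSend := by
      rw [Finset.sum_add_distrib, sum_rC, ← σ.all_processed]
    have hle : σ.nRecv + σ.nProc ≤ σ.nProc + σ.nSend := by
      rw [← h1, ← h2]
      exact Finset.sum_le_sum (fun i _ => hwa i)
    rw [h1, h2]
    omega
  intro i
  exact (Finset.sum_eq_sum_iff_of_le (fun i _ => hwa i)).1 hsum i (mem_univ i)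


def RT (σ : StarSchedule m (fun _ => c) w L) : Finset ℝ := univ.image σ.rstart
def ST (σ : StarSchedule m (fun _ => c) w L) : Finset ℝ := univ.image σ.sstart
def PT (σ : StarSchedule m (fun _ => c) w L) (i : Fin m) : Finset ℝ :=
  (univ.filter (fun p => σ.pw p = i)).image σ.pstart

lemma RT_card (σ : StarSchedule m (fun _ => c) w L) (hc : 0 < c) :
    (RT σ).card = σ.nRecv := by
  rw [RT, card_image_of_injective _ (rstart_inj σ hc)]; simp

lemma ST_card (σ : StarSchedule m (fun _ => c) w L) (hc : 0 < c) :
    (ST σ).card = σ.nSend := by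
  rw [ST, card_image_of_injective _ (sstart_inj σ hc)]; simp

lemma PT_card (σ : StarSchedule m (fun _ => c) w L) (hw : ∀ i, 0 < w i) (i : Fin m) :
    (PT σ i).card = pC σ i := by
  rw [PT, card_image_of_injOn (pstart_injOn σ hw i)]; rfl

def eR (σ : StarSchedule m (fun _ => c) w L) (hc : 0 < c) : Fin σ.nRecv ↪o ℝ :=
  (RT σ).orderEmbOfFin (RT_card σ hc)

def eS (σ : StarSchedule m (fun _ => c) w L) (hc : 0 < c) : Fin σ.nSend ↪o ℝ :=
  (ST σ).orderEmbOfFin (ST_card σ hc)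

def eP (σ : StarSchedule m (fun _ => c) w L) (hw : ∀ i, 0 < w i) (i : Fin m) :
    Fin (pC σ i) ↪o ℝ :=
  (PT σ i).orderEmbOfFin (PT_card σ hw i)

lemma eR_le_iff (σ : StarSchedule m (fun _ => c) w L) (hc : 0 < c) (k : Fin σ.nRecv) (t : ℝ) :
    eR σ hc k ≤ t ↔ (k : ℕ) < (univ.filter (fun k' => σ.rstart k' ≤ t)).card := by
  rw [eR, orderEmb_le_iff]
  unfold RT
  rw [card_filter_image_injOn _ _ ((rstart_inj σ hc).injOn) (fun x => x ≤ t)]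

lemma eS_le_iff (σ : StarSchedule m (fun _ => c) w L) (hc : 0 < c) (k : Fin σ.nSend) (t : ℝ) :
    eS σ hc k ≤ t ↔ (k : ℕ) < (univ.filter (fun k' => σ.sstart k' ≤ t)).card := by
  rw [eS, orderEmb_le_iff]
  unfold ST
  rw [card_filter_image_injOn _ _ ((sstart_inj σ hc).injOn) (fun x => x ≤ t)]

lemma eP_le_iff (σ : StarSchedule m (fun _ => c) w L) (hw : ∀ i, 0 < w i) (i : Fin m)
    (q : Fin (pC σ i)) (t : ℝ) :
    eP σ hw i q ≤ t ↔ (q : ℕ) < pCt σ i t := by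
  rw [eP, orderEmb_le_iff]
  unfold PT pCt
  rw [card_filter_image_injOn _ _ (pstart_injOn σ hw i) (fun x => x ≤ t)]
  rw [filter_filter]

lemma eR_mem (σ : StarSchedule m (fun _ => c) w L) (hc : 0 < c) (k : Fin σ.nRecv) :
    ∃ a, σ.rstart a = eR σ hc k := by
  have := (RT σ).orderEmbOfFin_mem (RT_card σ hc) k
  unfold RT at this
  obtain ⟨a, _, ha⟩ := mem_image.1 this
  exact ⟨a, ha⟩

lemma eS_mem (σ : StarSchedule m (fun _ => c) w L) (hc : 0 < c) (k : Fin σ.nSend) :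
    ∃ a, σ.sstart a = eS σ hc k := by
  have := (ST σ).orderEmbOfFin_mem (ST_card σ hc) k
  unfold ST at this
  obtain ⟨a, _, ha⟩ := mem_image.1 this
  exact ⟨a, ha⟩


/-- demand of a net receiver -/
def dm (σ : StarSchedule m (fun _ => c) w L) (i : Fin m) : ℕ := rC σ i - sC σ i
/-- spare tasks of a net sender -/
def sp (σ : StarSchedule m (fun _ => c) w L) (i : Fin m) : ℕ := sC σ i - rC σ i
/-- number of communications in the new schedule -/
def n' (σ : StarSchedule m (fun _ => c) w L) : ℕ := ∑ i, dm σ i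

lemma nRecv_eq_nSend (σ : StarSchedule m (fun _ => c) w L) (hc : 0 < c) :
    σ.nRecv = σ.nSend := by
  have h1 : ∑ i, (sC σ i + pC σ i) = ∑ i, (L i + rC σ i) :=
    Finset.sum_congr rfl (fun i _ => tight σ hc i)
  rw [Finset.sum_add_distrib, Finset.sum_add_distrib, sum_sC, sum_pC, sum_rC,
    σ.all_processed] at h1
  omega

lemma sum_sp (σ : StarSchedule m (fun _ => c) w L) (hc : 0 < c) :
    ∑ i, sp σ i = n' σ := by
  have h : ∀ i, sC σ i + dm σ i = rC σ i + sp σ i := by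
    intro i; unfold dm sp; omega
  have h1 : ∑ i, (sC σ i + dm σ i) = ∑ i, (rC σ i + sp σ i) :=
    Finset.sum_congr rfl (fun i _ => h i)
  rw [Finset.sum_add_distrib, Finset.sum_add_distrib, sum_sC, sum_rC] at h1
  have := nRecv_eq_nSend σ hc
  unfold n'
  omega

lemma n'_le_nSend (σ : StarSchedule m (fun _ => c) w L) : n' σ ≤ σ.nSend := by
  rw [← sum_rC σ]
  exact Finset.sum_le_sum (fun i _ => Nat.sub_le _ _)

lemma n'_le_nRecv (σ : StarSchedule m (fun _ => c) w L) (hc : 0 < c) : n' σ ≤ σ.nRecv := by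
  rw [← sum_sp σ hc, ← sum_sC σ]
  exact Finset.sum_le_sum (fun i _ => Nat.sub_le _ _)

/-- the deadline of the `x.2`-th demanded task of net receiver `x.1` -/
def DL (σ : StarSchedule m (fun _ => c) w L) (hw : ∀ i, 0 < w i)
    (x : Σ i : Fin m, Fin (dm σ i)) : ℝ :=
  if h : L x.1 + (x.2 : ℕ) < pC σ x.1 then eP σ hw x.1 ⟨L x.1 + (x.2 : ℕ), h⟩ else 0

lemma DL_lt (σ : StarSchedule m (fun _ => c) w L) (hc : 0 < c)
    (x : Σ i : Fin m, Fin (dm σ i)) : L x.1 + (x.2 : ℕ) < pC σ x.1 := by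
  have h1 := tight σ hc x.1
  have h2 : (x.2 : ℕ) < dm σ x.1 := x.2.isLt
  unfold dm at h2
  omega

lemma DL_eq (σ : StarSchedule m (fun _ => c) w L) (hc : 0 < c) (hw : ∀ i, 0 < w i)
    (x : Σ i : Fin m, Fin (dm σ i)) :
    DL σ hw x = eP σ hw x.1 ⟨L x.1 + (x.2 : ℕ), DL_lt σ hc x⟩ := dif_pos _

lemma sigma_fin_eq {d : Fin m → ℕ} {x y : Σ i, Fin (d i)}
    (h1 : x.1 = y.1) (h2 : (x.2 : ℕ) = (y.2 : ℕ)) : x = y := by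
  rcases x with ⟨a, qa⟩
  rcases y with ⟨b, qb⟩
  simp only at h1 h2
  subst h1
  simp [Fin.ext_iff, h2]

end
end NB


open NB Finset

/-- **Sending chains can be eliminated.**  On a star platform with homogeneous
communication links (every link has per-task communication time `c`) and
arbitrary worker computation times `w i`, if there exists a valid schedule with
makespan at most `M`, then there also exists a valid schedule with makespan at
most `M` in which no worker both sends tasks and receives tasks. -/
theorem no_worker_both_sends_and_receives
    (m : ℕ) (c : ℝ) (hc : 0 < c) (w : Fin m → ℝ) (hw : ∀ i, 0 < w i)
    (L : Fin m → ℕ) (M : ℝ)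
    (σ : StarSchedule m (fun _ => c) w L) (hσ : FinishesBy σ M) :
    ∃ σ' : StarSchedule m (fun _ => c) w L, FinishesBy σ' M ∧
      ∀ i : Fin m, ¬ ((∃ k, σ'.rsrc k = i) ∧ (∃ k', σ'.sdst k' = i)) := by
  classical
  have hn'R : n' σ ≤ σ.nRecv := n'_le_nRecv σ hc
  have hn'S : n' σ ≤ σ.nSend := n'_le_nSend σ
  obtain ⟨EA⟩ : Nonempty ((Σ i : Fin m, Fin (sp σ i)) ≃ Fin (n' σ)) :=
    ⟨Fintype.equivFinOfCardEq (by simp [Fintype.card_sigma, sum_sp σ hc])⟩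
  obtain ⟨ED⟩ : Nonempty ((Σ i : Fin m, Fin (dm σ i)) ≃ Fin (n' σ)) :=
    ⟨Fintype.equivFinOfCardEq (by simp [Fintype.card_sigma, n'])⟩
  obtain ⟨prm, hmono⟩ : ∃ prm : Equiv.Perm (Fin (n' σ)),
      Monotone (fun k => DL σ hw (ED.symm (prm k))) :=
    ⟨Tuple.sort (fun k => DL σ hw (ED.symm k)),
     Tuple.monotone_sort (fun k => DL σ hw (ED.symm k))⟩
  -- key fact 1 : the k-th smallest recv slot completes before the k-th smallest send slot
  have keyM : ∀ k : Fin (n' σ),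
      eR σ hc (Fin.castLE hn'R k) + c ≤ eS σ hc (Fin.castLE hn'S k) := by
    intro k
    set t := eS σ hc (Fin.castLE hn'S k) with ht
    have h1 : (k : ℕ) < (univ.filter (fun k' => σ.sstart k' ≤ t)).card := by
      have := (eS_le_iff σ hc (Fin.castLE hn'S k) t).1 le_rfl
      simpa using this
    have h2 := σ.master_avail t
    have h3 : (univ.filter (fun k' => σ.rstart k' + (fun _ => c) (σ.rsrc k') ≤ t)) =
        (univ.filter (fun k' => σ.rstart k' ≤ t - c)) := by
      apply filter_congr; intro k' _
      simp [le_sub_iff_add_le]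
    rw [h3] at h2
    have h4 : ((Fin.castLE hn'R k : Fin σ.nRecv) : ℕ) <
        (univ.filter (fun k' => σ.rstart k' ≤ t - c)).card := by
      simpa using lt_of_lt_of_le h1 h2
    have h5 := (eR_le_iff σ hc (Fin.castLE hn'R k) (t - c)).2 h4
    linarith
  -- key fact 2 : the k-th smallest send slot completes before the k-th smallest deadline
  have keyT : ∀ k : Fin (n' σ),
      eS σ hc (Fin.castLE hn'S k) + c ≤ DL σ hw (ED.symm (prm k)) := by
    intro k
    set t := DL σ hw (ED.symm (prm k)) with ht
    have hA : (k : ℕ) < (univ.filter (fun k' : Fin (n' σ) =>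
        DL σ hw (ED.symm (prm k')) ≤ t)).card := by
      have hsub : (univ.filter (fun k' : Fin (n' σ) => k' ≤ k)) ⊆
          (univ.filter (fun k' : Fin (n' σ) => DL σ hw (ED.symm (prm k')) ≤ t)) := by
        intro k' hk'
        simp only [mem_filter, mem_univ, true_and] at hk' ⊢
        exact hmono hk'
      have hIic : (univ.filter (fun k' : Fin (n' σ) => k' ≤ k)) = Finset.Iic k := by
        ext x; simp
      have hcard : (univ.filter (fun k' : Fin (n' σ) => k' ≤ k)).card = (k : ℕ) + 1 := by
        rw [hIic, Fin.card_Iic]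
      calc (k : ℕ) < (k : ℕ) + 1 := Nat.lt_succ_self _
        _ ≤ _ := by rw [← hcard]; exact card_le_card hsub
    have hB : (univ.filter (fun k' : Fin (n' σ) => DL σ hw (ED.symm (prm k')) ≤ t)).card
        = ∑ i, ((univ.filter (fun k' : Fin (n' σ) => DL σ hw (ED.symm (prm k')) ≤ t)).filter
            (fun k' => (ED.symm (prm k')).1 = i)).card :=
      card_eq_sum_card_fiberwise (fun x _ => mem_univ _)
    have hC' : ∀ (x : Σ i : Fin m, Fin (dm σ i)), DL σ hw x ≤ t →
        (x.2 : ℕ) < pCt σ x.1 t - L x.1 := by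
      rintro ⟨a, q⟩ hx
      rw [DL_eq σ hc hw] at hx
      dsimp only at hx ⊢
      have h1 := (eP_le_iff σ hw a _ t).1 hx
      dsimp only at h1
      have h2 := q.isLt
      omega
    have hC : ∀ i, ((univ.filter (fun k' : Fin (n' σ) => DL σ hw (ED.symm (prm k')) ≤ t)).filter
        (fun k' => (ED.symm (prm k')).1 = i)).card ≤ pCt σ i t - L i := by
      intro i
      have hle := Finset.card_le_card_of_injOn (fun k' => ((ED.symm (prm k')).2 : ℕ))
        (s := (univ.filter (fun k' : Fin (n' σ) => DL σ hw (ED.symm (prm k')) ≤ t)).filter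
            (fun k' => (ED.symm (prm k')).1 = i))
        (t := Finset.range (pCt σ i t - L i)) ?_ ?_
      · simpa using hle
      · intro k' hk'
        simp only [Finset.mem_coe, mem_filter, mem_univ, true_and] at hk'
        obtain ⟨hdl, hfst⟩ := hk'
        have h1 := hC' (ED.symm (prm k')) hdl
        rw [Finset.mem_coe, Finset.mem_range]
        calc ((ED.symm (prm k')).2 : ℕ)
            < pCt σ (ED.symm (prm k')).1 t - L (ED.symm (prm k')).1 := h1
          _ = pCt σ i t - L i := by rw [hfst]
      · intro k1 hk1 k2 hk2 hval
        simp only [coe_filter, Set.mem_setOf_eq, mem_filter, mem_univ, true_and] at hk1 hk2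
        have hx : ED.symm (prm k1) = ED.symm (prm k2) :=
          sigma_fin_eq (by rw [hk1.2, hk2.2]) hval
        exact prm.injective (ED.symm.injective hx)
    have hD : ∀ i, pCt σ i t - L i ≤
        (univ.filter (fun k' => σ.sdst k' = i ∧ σ.sstart k' + (fun _ => c) (σ.sdst k') ≤ t)).card := by
      intro i
      have h : (univ.filter (fun k => σ.rsrc k = i ∧ σ.rstart k ≤ t)).card + pCt σ i t ≤
          L i + (univ.filter (fun k => σ.sdst k = i ∧
            σ.sstart k + (fun _ => c) (σ.sdst k) ≤ t)).card := σ.worker_avail i t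
      omega
    have hE : ∑ i, (univ.filter (fun k' => σ.sdst k' = i ∧
        σ.sstart k' + (fun _ => c) (σ.sdst k') ≤ t)).card
        = (univ.filter (fun k' => σ.sstart k' + (fun _ => c) (σ.sdst k') ≤ t)).card := by
      rw [card_eq_sum_card_fiberwise (f := fun k' => σ.sdst k')
        (t := (univ : Finset (Fin m))) (fun x _ => mem_univ _)]
      apply Finset.sum_congr rfl
      intro i _
      congr 1
      rw [filter_filter]
      apply filter_congr
      intro k' _
      exact and_comm
    have hF : (k : ℕ) < (univ.filter (fun k' => σ.sstart k' + (fun _ => c) (σ.sdst k') ≤ t)).card := by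
      calc (k : ℕ) < (univ.filter (fun k' : Fin (n' σ) =>
            DL σ hw (ED.symm (prm k')) ≤ t)).card := hA
        _ = ∑ i, ((univ.filter (fun k' : Fin (n' σ) =>
            DL σ hw (ED.symm (prm k')) ≤ t)).filter
              (fun k' => (ED.symm (prm k')).1 = i)).card := hB
        _ ≤ ∑ i, (pCt σ i t - L i) := Finset.sum_le_sum (fun i _ => hC i)
        _ ≤ ∑ i, (univ.filter (fun k' => σ.sdst k' = i ∧
            σ.sstart k' + (fun _ => c) (σ.sdst k') ≤ t)).card :=
          Finset.sum_le_sum (fun i _ => hD i)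
        _ = _ := hE
    have hG : (univ.filter (fun k' => σ.sstart k' + (fun _ => c) (σ.sdst k') ≤ t)) =
        (univ.filter (fun k' => σ.sstart k' ≤ t - c)) := by
      apply filter_congr; intro k' _
      simp [le_sub_iff_add_le]
    rw [hG] at hF
    have h5 := (eS_le_iff σ hc (Fin.castLE hn'S k) (t - c)).2 (by simpa using hF)
    linarith
  refine ⟨{
    nRecv := n' σ
    nSend := n' σ
    nProc := σ.nProc
    rsrc := fun k => (EA.symm k).1
    rstart := fun k => eR σ hc (Fin.castLE hn'R k)
    sdst := fun k => (ED.symm (prm k)).1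
    sstart := fun k => eS σ hc (Fin.castLE hn'S k)
    pw := σ.pw
    pstart := σ.pstart
    rstart_nonneg := ?_
    sstart_nonneg := ?_
    pstart_nonneg := σ.pstart_nonneg
    all_processed := σ.all_processed
    oneport_in := ?_
    oneport_out := ?_
    master_avail := ?_
    worker_avail := ?_
    proc_seq := σ.proc_seq }, ?_, ?_⟩
  -- rstart_nonneg
  · intro k
    obtain ⟨a, ha⟩ := eR_mem σ hc (Fin.castLE hn'R k)
    rw [← ha]
    exact σ.rstart_nonneg a
  -- sstart_nonneg
  · intro k
    obtain ⟨a, ha⟩ := eS_mem σ hc (Fin.castLE hn'S k)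
    rw [← ha]
    exact σ.sstart_nonneg a
  -- oneport_in
  · intro k k' hne
    obtain ⟨a, ha⟩ := eR_mem σ hc (Fin.castLE hn'R k)
    obtain ⟨b, hb⟩ := eR_mem σ hc (Fin.castLE hn'R k')
    have hab : a ≠ b := by
      intro h
      apply hne
      apply Fin.castLE_injective hn'R
      apply (eR σ hc).injective
      rw [← ha, ← hb, h]
    have := σ.oneport_in a b hab
    rw [ha, hb] at this
    exact this
  -- oneport_out
  · intro k k' hne
    obtain ⟨a, ha⟩ := eS_mem σ hc (Fin.castLE hn'S k)
    obtain ⟨b, hb⟩ := eS_mem σ hc (Fin.castLE hn'S k')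
    have hab : a ≠ b := by
      intro h
      apply hne
      apply Fin.castLE_injective hn'S
      apply (eS σ hc).injective
      rw [← ha, ← hb, h]
    have := σ.oneport_out a b hab
    rw [ha, hb] at this
    exact this
  -- master_avail
  · intro t
    apply card_le_card
    intro k hk
    simp only [mem_filter, mem_univ, true_and] at hk ⊢
    exact le_trans (keyM k) hk
  -- worker_avail
  · intro i t
    by_cases hrecv : sC σ i < rC σ i
    · -- net receiver : no new receptions from i
      have hzero : sp σ i = 0 := by unfold sp; omega
      have hF1 : (univ.filter (fun k : Fin (n' σ) => (EA.symm k).1 = i ∧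
          eR σ hc (Fin.castLE hn'R k) ≤ t)) = ∅ := by
        rw [Finset.eq_empty_iff_forall_notMem]
        intro k hk
        simp only [mem_filter, mem_univ, true_and] at hk
        have hpos : 0 < sp σ ((EA.symm k).1) :=
          Nat.lt_of_le_of_lt (Nat.zero_le _) (EA.symm k).2.isLt
        rw [hk.1, hzero] at hpos
        exact Nat.lt_irrefl 0 hpos
      rw [hF1]
      simp only [card_empty, zero_add]
      by_cases hQ : (univ.filter (fun p => σ.pw p = i ∧ σ.pstart p ≤ t)).card ≤ L i
      · exact le_trans hQ (Nat.le_add_right _ _)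
      · push_neg at hQ
        have hpct : pCt σ i t ≤ pC σ i := by
          apply card_le_card
          apply monotone_filter_right
          intro p _ hp
          exact hp.1
        have htight := tight σ hc i
        have hQd : pCt σ i t - L i ≤ dm σ i := by unfold dm; omega
        have hn'pos : 0 < n' σ := by
          have h1 : 0 < dm σ i := by
            have : L i < pCt σ i t := hQ
            omega
          have h2 : dm σ i ≤ n' σ :=
            Finset.single_le_sum (f := fun j => dm σ j) (fun j _ => Nat.zero_le _) (mem_univ i)
          omega
        -- the injection from demands of `i` with deadline ≤ t into new send events
        have hinj := Finset.card_le_card_of_injOn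
          (f := fun q : ℕ => if hq : q < dm σ i then prm.symm (ED ⟨i, ⟨q, hq⟩⟩)
            else (⟨0, hn'pos⟩ : Fin (n' σ)))
          (s := Finset.range (pCt σ i t - L i))
          (t := univ.filter (fun k : Fin (n' σ) => (ED.symm (prm k)).1 = i ∧
            eS σ hc (Fin.castLE hn'S k) + c ≤ t))
          ?_ ?_
        · rw [Finset.card_range] at hinj
          have : L i < pCt σ i t := hQ
          have : pCt σ i t = (univ.filter (fun p => σ.pw p = i ∧ σ.pstart p ≤ t)).card := rfl
          omega
        · intro q hq
          rw [Finset.mem_coe, Finset.mem_range] at hq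
          have hqdm : q < dm σ i := lt_of_lt_of_le hq hQd
          simp only [dif_pos hqdm, Finset.mem_coe, mem_filter, mem_univ, true_and,
            Equiv.apply_symm_apply, Equiv.symm_apply_apply, true_and]
          have h1 := keyT (prm.symm (ED ⟨i, ⟨q, hqdm⟩⟩))
          rw [Equiv.apply_symm_apply, Equiv.symm_apply_apply] at h1
          rw [DL_eq σ hc hw] at h1
          have h2 : eP σ hw i ⟨L i + q, DL_lt σ hc ⟨i, ⟨q, hqdm⟩⟩⟩ ≤ t := by
            rw [eP_le_iff]
            simp only
            omega
          calc eS σ hc (Fin.castLE hn'S (prm.symm (ED ⟨i, ⟨q, hqdm⟩⟩))) + c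
              ≤ eP σ hw i ⟨L i + q, DL_lt σ hc ⟨i, ⟨q, hqdm⟩⟩⟩ := h1
            _ ≤ t := h2
        · intro q1 hq1 q2 hq2 hval
          simp only [coe_range, Set.mem_Iio] at hq1 hq2
          have hq1d : q1 < dm σ i := lt_of_lt_of_le hq1 hQd
          have hq2d : q2 < dm σ i := lt_of_lt_of_le hq2 hQd
          simp only [dif_pos hq1d, dif_pos hq2d] at hval
          have := ED.injective (prm.symm.injective hval)
          simpa [Fin.ext_iff] using congrArg (fun x => ((x.2 : ℕ)) ) this
    · -- net sender or balanced : no new send events to i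
      push_neg at hrecv
      have htight := tight σ hc i
      have hF1 : (univ.filter (fun k : Fin (n' σ) => (EA.symm k).1 = i ∧
          eR σ hc (Fin.castLE hn'R k) ≤ t)).card ≤ sp σ i := by
        have hle := Finset.card_le_card_of_injOn
          (f := fun k : Fin (n' σ) => ((EA.symm k).2 : ℕ))
          (s := univ.filter (fun k : Fin (n' σ) => (EA.symm k).1 = i ∧
            eR σ hc (Fin.castLE hn'R k) ≤ t))
          (t := Finset.range (sp σ i)) ?_ ?_
        · exact by simpa using hle
        · intro k hk
          simp only [Finset.mem_coe, mem_filter, mem_univ, true_and] at hk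
          rw [Finset.mem_coe, Finset.mem_range]
          calc ((EA.symm k).2 : ℕ) < sp σ ((EA.symm k).1) := (EA.symm k).2.isLt
            _ = sp σ i := by rw [hk.1]
        · intro k1 hk1 k2 hk2 hval
          simp only [coe_filter, Set.mem_setOf_eq, mem_filter, mem_univ, true_and] at hk1 hk2
          have hx : EA.symm k1 = EA.symm k2 :=
            sigma_fin_eq (by rw [hk1.1, hk2.1]) hval
          exact EA.symm.injective hx
      have hpct : pCt σ i t ≤ pC σ i := by
        apply card_le_card
        apply monotone_filter_right
        intro p _ hp
        exact hp.1
      have hspi : sp σ i = sC σ i - rC σ i := rfl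
      have hkey : (univ.filter (fun k : Fin (n' σ) => (EA.symm k).1 = i ∧
          eR σ hc (Fin.castLE hn'R k) ≤ t)).card + pCt σ i t ≤ L i := by omega
      have : pCt σ i t = (univ.filter (fun p => σ.pw p = i ∧ σ.pstart p ≤ t)).card := rfl
      omega
  -- FinishesBy
  · exact hσ
  -- no worker both sends and receives
  · rintro i ⟨⟨k, hk⟩, ⟨k', hk'⟩⟩
    dsimp only at hk hk'
    have h1 : 0 < sp σ i := by
      have := Nat.lt_of_le_of_lt (Nat.zero_le _) (EA.symm k).2.isLt
      rwa [hk] at this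
    have h2 : 0 < dm σ i := by
      have := Nat.lt_of_le_of_lt (Nat.zero_le _) (ED.symm (prm k')).2.isLt
      rwa [hk'] at this
    unfold sp at h1
    unfold dm at h2
    omega
end

section
/- In the divisible-load switch model, the optimal value T_0 of the linear program 'minimize T subject to |δ_i| ≤ T·b_i for all i, δ_i ≥ α_i − T·s_i for all i, and Σ_i δ_i = 0' is a lower bound on the makespan of every valid redistribution-and-computation schedule: for any valid schedule of makespan T, the amounts sent and received in that schedule yield values δ_i satisfying all constraints of the linear program with that T, hence T_0 ≤ T. -/
/-!
The imbalances `δ i = send i - recv i` of a valid schedule of makespan `T` satisfy the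
constraints of the linear program at `T`, one worker at a time, and they sum to zero by
conservation. Since every `b i` is positive, `|δ i| ≤ T' * b i` forces `T' ≥ 0` on the feasible
set, which is therefore bounded below (and nonempty), so its `sInf` is the genuine optimum and
lies below `T`.
-/

open Finset

variable {ι : Type*} [Fintype ι]

def lpFeasibleMakespans (b s a : ι → ℝ) : Set ℝ :=
  {T' | ∃ d : ι → ℝ, (∀ i, |d i| ≤ T' * b i) ∧ (∀ i, a i - T' * s i ≤ d i) ∧ ∑ i, d i = 0}

theorem lpFeasibleMakespans_bddBelow [Nonempty ι] {b : ι → ℝ} (hb : ∀ i, 0 < b i)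
    (s a : ι → ℝ) : BddBelow (lpFeasibleMakespans b s a) := by
  refine ⟨0, fun T' ⟨d, hd, _⟩ => ?_⟩
  let i := Classical.arbitrary ι
  exact nonneg_of_mul_nonneg_left ((abs_nonneg (d i)).trans (hd i)) (hb i)

theorem excess_le_send_sub_recv {a c x y : ℝ} (hx : 0 ≤ x) (hy : 0 ≤ y)
    (hsend : 0 < x → a - c ≤ x) (hrecv : 0 < y → a + y ≤ c)
    (hidle : x = 0 → y = 0 → a ≤ c) : a - c ≤ x - y := by
  rcases hy.lt_or_eq with hy | rfl
  · linarith [hrecv hy]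
  rcases hx.lt_or_eq with hx | rfl
  · linarith [hsend hx]
  · linarith [hidle rfl rfl]

theorem lp_lower_bound_on_makespan_general
    (m : ℕ) (hm : 0 < m) (b s a : Fin m → ℝ)
    (hb : ∀ i, 0 < b i)
    (T : ℝ) (send recv : Fin m → ℝ)
    (hsend0 : ∀ i, 0 ≤ send i) (hrecv0 : ∀ i, 0 ≤ recv i)
    (hsendB : ∀ i, send i ≤ T * b i)
    (hrecvB : ∀ i, recv i ≤ T * b i)
    (hsendLB : ∀ i, 0 < send i → a i - T * s i ≤ send i)
    (hrecvUB : ∀ i, 0 < recv i → a i + recv i ≤ T * s i)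
    (hneither : ∀ i, send i = 0 → recv i = 0 → a i ≤ T * s i)
    (hconserv : ∑ i, send i = ∑ i, recv i) :
    (∀ i, |send i - recv i| ≤ T * b i) ∧
    (∀ i, a i - T * s i ≤ send i - recv i) ∧
    (∑ i, (send i - recv i)) = 0 ∧
    sInf {T' : ℝ | ∃ d : Fin m → ℝ, (∀ i, |d i| ≤ T' * b i) ∧
      (∀ i, a i - T' * s i ≤ d i) ∧ ∑ i, d i = 0} ≤ T := by
  have : Nonempty (Fin m) := ⟨⟨0, hm⟩⟩
  have hbandwidth i : |send i - recv i| ≤ T * b i :=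
    abs_sub_le_of_nonneg_of_le (hsend0 i) (hsendB i) (hrecv0 i) (hrecvB i)
  have hexcess i : a i - T * s i ≤ send i - recv i :=
    excess_le_send_sub_recv (hsend0 i) (hrecv0 i) (hsendLB i) (hrecvUB i) (hneither i)
  have hbalance : ∑ i, (send i - recv i) = 0 := by rw [sum_sub_distrib, hconserv, sub_self]
  exact ⟨hbandwidth, hexcess, hbalance,
    csInf_le (lpFeasibleMakespans_bddBelow hb s a) ⟨_, hbandwidth, hexcess, hbalance⟩⟩

/-- **The linear program is a lower bound on the makespan.**
In the divisible-load switch model (`m` workers, bandwidths `b i`, speeds `s i`,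
initial loads `a i`), consider any valid schedule of makespan `T`: each worker
sends `send i ≥ 0` and receives `recv i ≥ 0` (not both), within the bandwidth
bounds `send i ≤ T * b i` and `recv i ≤ T * b i`; a sender must send at least its
unprocessable excess (`a i - T * s i ≤ send i`), a receiver must be able to
process everything it holds (`a i + recv i ≤ T * s i`), a worker doing neither
must process its own load (`a i ≤ T * s i`), and the total sent equals the total
received.  Then the imbalances `δ i = send i - recv i` satisfy all the
constraints of the linear program `minimize T'` subject to `|δ i| ≤ T' * b i`,
`a i - T' * s i ≤ δ i` and `∑ δ i = 0`; consequently the optimal value `T₀` of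
the linear program is at most `T`. -/
theorem lp_lower_bound_on_makespan
    (m : ℕ) (hm : 0 < m) (b s a : Fin m → ℝ)
    (hb : ∀ i, 0 < b i) (hs : ∀ i, 0 < s i) (ha : ∀ i, 0 ≤ a i)
    (T : ℝ) (send recv : Fin m → ℝ)
    (hsend0 : ∀ i, 0 ≤ send i) (hrecv0 : ∀ i, 0 ≤ recv i)
    (hexcl : ∀ i, send i = 0 ∨ recv i = 0)
    (hsendB : ∀ i, send i ≤ T * b i)
    (hrecvB : ∀ i, recv i ≤ T * b i)
    (hsendLB : ∀ i, 0 < send i → a i - T * s i ≤ send i)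
    (hrecvUB : ∀ i, 0 < recv i → a i + recv i ≤ T * s i)
    (hneither : ∀ i, send i = 0 → recv i = 0 → a i ≤ T * s i)
    (hconserv : ∑ i, send i = ∑ i, recv i) :
    (∀ i, |send i - recv i| ≤ T * b i) ∧
    (∀ i, a i - T * s i ≤ send i - recv i) ∧
    (∑ i, (send i - recv i)) = 0 ∧
    sInf {T' : ℝ | ∃ d : Fin m → ℝ, (∀ i, |d i| ≤ T' * b i) ∧
      (∀ i, a i - T' * s i ≤ d i) ∧ ∑ i, d i = 0} ≤ T :=
  lp_lower_bound_on_makespan_general m hm b s a hb T send recv hsend0 hrecv0 hsendB hrecvB hsendLB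
    hrecvUB hneither hconserv
end

section
/- In the divisible-load switch model, the minimal achievable makespan for balancing the initial loads equals the optimal value T_0 of the linear program 'minimize T subject to |δ_i| ≤ T·b_i for all i, δ_i ≥ α_i − T·s_i for all i, and Σ_i δ_i = 0'; moreover an optimal schedule of makespan exactly T_0 is obtained by letting each sender i send to each receiver j the amount f_{i,j} = δ_i·δ_j/(−L), where L = Σ_{δ_i>0} δ_i, at the constant communication rate λ_{i,j} = f_{i,j}/T_0 throughout [0, T_0], with each receiver j computing each incoming stream at rate γ_{i,j} = f_{i,j}/T_0 and its initial load at rate α_j/T_0. -/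
open scoped Classical

/-- **Optimal load balancing of divisible loads on the switch model.**
In the divisible-load switch model (`m` workers, bandwidths `b i`, computation
speeds `s i`, initial divisible loads `a i ≥ 0`), the minimal achievable makespan
equals the optimal value `T₀` of the linear program `minimize T` subject to
`|δ i| ≤ T * b i`, `a i - T * s i ≤ δ i` and `∑ δ i = 0`: `T₀` is the least `T`
for which a valid redistribution-and-computation schedule (given by amounts
`send i`, `recv i` within the bandwidth and speed constraints) exists.  Moreover,
an optimal schedule of makespan exactly `T₀` is obtained from an optimal LP
solution `d` by letting each sender `i` send to each receiver `j` the amount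
`f i j = d i * d j / (-L)` (`L` being the total transferred load) at the constant
communication rate `f i j / T₀` throughout `[0, T₀]`, each receiver computing
each incoming stream at rate `f i j / T₀` and its initial load at rate
`a j / T₀`: the senders send exactly their excess, the receivers receive exactly
their deficit, every receiver finishes processing everything by `T₀`, and all
communication rates fit within the bandwidths. -/
theorem divisible_load_switch_model_optimal
    (m : ℕ) (hm : 0 < m) (b s a : Fin m → ℝ)
    (hb : ∀ i, 0 < b i) (hs : ∀ i, 0 < s i) (ha : ∀ i, 0 ≤ a i) :
    let LPfeasible : ℝ → Prop := fun T => ∃ d : Fin m → ℝ,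
      (∀ i, |d i| ≤ T * b i) ∧ (∀ i, a i - T * s i ≤ d i) ∧ ∑ i, d i = 0
    let T₀ : ℝ := sInf {T | LPfeasible T}
    let ValidSchedule : ℝ → Prop := fun T => 0 ≤ T ∧
      ∃ send recv : Fin m → ℝ,
        (∀ i, 0 ≤ send i) ∧ (∀ i, 0 ≤ recv i) ∧
        (∀ i, send i = 0 ∨ recv i = 0) ∧
        (∀ i, send i ≤ T * b i) ∧ (∀ i, recv i ≤ T * b i) ∧
        (∀ i, a i - T * s i ≤ send i - recv i) ∧
        ∑ i, send i = ∑ i, recv i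
    IsLeast {T | ValidSchedule T} T₀ ∧
    ∃ d : Fin m → ℝ,
      (∀ i, |d i| ≤ T₀ * b i) ∧ (∀ i, a i - T₀ * s i ≤ d i) ∧ (∑ i, d i = 0) ∧
      (let Snd : Finset (Fin m) := Finset.univ.filter (fun i => 0 < d i)
       let Rcv : Finset (Fin m) := Finset.univ.filter (fun j => d j < 0)
       let Lld : ℝ := ∑ i ∈ Snd, d i
       let f : Fin m → Fin m → ℝ := fun i j => d i * d j / (-Lld)
       (∀ i ∈ Snd, ∑ j ∈ Rcv, f i j = d i) ∧
       (∀ j ∈ Rcv, ∑ i ∈ Snd, f i j = -d j) ∧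
       (∀ j ∈ Rcv, (∑ i ∈ Snd, f i j / T₀) + a j / T₀ ≤ s j) ∧
       (∀ i ∈ Snd, ∑ j ∈ Rcv, f i j / T₀ ≤ b i) ∧
       (∀ j ∈ Rcv, ∑ i ∈ Snd, f i j / T₀ ≤ b j)) := by
  intro LPfeasible T₀ ValidSchedule
  set S : Set ℝ := {T | LPfeasible T} with hS
  -- every feasible T is nonnegative
  have hnonneg : ∀ T ∈ S, (0:ℝ) ≤ T := by
    rintro T ⟨d, hd1, _, _⟩
    have h1 := hd1 ⟨0, hm⟩
    have h2 := abs_nonneg (d ⟨0, hm⟩)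
    have h3 := hb ⟨0, hm⟩
    nlinarith
  -- S is nonempty
  have hSne : S.Nonempty := by
    refine ⟨∑ j, a j / s j, 0, ?_, ?_, by simp⟩
    · intro i
      simp only [Pi.zero_apply, abs_zero]
      have h0 : (0:ℝ) ≤ ∑ j, a j / s j :=
        Finset.sum_nonneg fun j _ => div_nonneg (ha j) (hs j).le
      exact mul_nonneg h0 (hb i).le
    · intro i
      have h1 : a i / s i ≤ ∑ j, a j / s j :=
        Finset.single_le_sum (f := fun j => a j / s j)
          (fun j _ => div_nonneg (ha j) (hs j).le) (Finset.mem_univ i)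
      have h2 : (a i / s i) * s i = a i := div_mul_cancel₀ _ (hs i).ne'
      have h3 := mul_le_mul_of_nonneg_right h1 (hs i).le
      simp only [Pi.zero_apply]
      nlinarith
  have hSbdd : BddBelow S := ⟨0, hnonneg⟩
  -- the feasibility region at the optimum: compactness argument
  have hT₀mem : LPfeasible T₀ := by
    classical
    set C : Set (ℝ × (Fin m → ℝ)) :=
      {p | p.1 ∈ Set.Icc T₀ (T₀ + 1) ∧ (∀ i, |p.2 i| ≤ p.1 * b i) ∧
        (∀ i, a i - p.1 * s i ≤ p.2 i) ∧ ∑ i, p.2 i = 0} with hC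
    have hCclosed : IsClosed C := by
      have h1 : IsClosed {p : ℝ × (Fin m → ℝ) | p.1 ∈ Set.Icc T₀ (T₀ + 1)} :=
        isClosed_Icc.preimage continuous_fst
      have h2 : IsClosed {p : ℝ × (Fin m → ℝ) | ∀ i, |p.2 i| ≤ p.1 * b i} := by
        rw [Set.setOf_forall]
        exact isClosed_iInter fun i => isClosed_le
          ((continuous_apply i).comp continuous_snd).abs (continuous_fst.mul continuous_const)
      have h3 : IsClosed {p : ℝ × (Fin m → ℝ) | ∀ i, a i - p.1 * s i ≤ p.2 i} := by
        rw [Set.setOf_forall]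
        exact isClosed_iInter fun i => isClosed_le
          (continuous_const.sub (continuous_fst.mul continuous_const))
          ((continuous_apply i).comp continuous_snd)
      have h4 : IsClosed {p : ℝ × (Fin m → ℝ) | ∑ i, p.2 i = 0} :=
        isClosed_eq (continuous_finset_sum _ fun i _ => (continuous_apply i).comp continuous_snd)
          continuous_const
      have : C = ({p : ℝ × (Fin m → ℝ) | p.1 ∈ Set.Icc T₀ (T₀ + 1)} ∩
          {p | ∀ i, |p.2 i| ≤ p.1 * b i} ∩ {p | ∀ i, a i - p.1 * s i ≤ p.2 i} ∩
          {p | ∑ i, p.2 i = 0}) := by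
        ext p
        simp only [hC, Set.mem_setOf_eq, Set.mem_inter_iff]
        tauto
      rw [this]
      exact ((h1.inter h2).inter h3).inter h4
    -- C is compact
    have hT₀0 : (0:ℝ) ≤ T₀ := le_csInf hSne hnonneg
    have hsub : C ⊆ Set.Icc T₀ (T₀ + 1) ×ˢ
        Set.Icc (fun i => -((T₀ + 1) * b i)) (fun i => (T₀ + 1) * b i) := by
      rintro ⟨T, d⟩ ⟨hT, hd1, _, _⟩
      have hTb : ∀ i, T * b i ≤ (T₀ + 1) * b i := by
        intro i
        have := hb i
        nlinarith [hT.2, hT.1]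
      refine ⟨hT, fun i => ?_, fun i => ?_⟩
      · have := (abs_le.mp ((hd1 i).trans (hTb i))).1
        simpa using this
      · exact (abs_le.mp ((hd1 i).trans (hTb i))).2
    have hCcompact : IsCompact C :=
      (isCompact_Icc.prod isCompact_Icc).of_isClosed_subset hCclosed hsub
    -- the projection
    set D : Set ℝ := Prod.fst '' C with hD
    have hDcompact : IsCompact D := hCcompact.image continuous_fst
    have hDS : ∀ T ∈ S, T ≤ T₀ + 1 → T ∈ D := by
      rintro T ⟨d, hd⟩ hle
      exact ⟨(T, d), ⟨⟨csInf_le hSbdd ⟨d, hd⟩, hle⟩, hd⟩, rfl⟩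
    have hDne : D.Nonempty := by
      obtain ⟨T, hT, hTlt⟩ := exists_lt_of_csInf_lt hSne (lt_add_one T₀)
      exact ⟨T, hDS T hT hTlt.le⟩
    have hD1 : T₀ ≤ sInf D := by
      apply le_csInf hDne
      rintro T ⟨p, hp, rfl⟩
      exact hp.1.1
    have hD2 : sInf D ≤ T₀ := by
      by_contra h
      push_neg at h
      obtain ⟨T, hT, hTlt⟩ := exists_lt_of_csInf_lt hSne
        (show sInf S < min (sInf D) (T₀ + 1) from lt_min h (lt_add_one T₀))
      have hTD : T ∈ D := hDS T hT (le_of_lt (lt_of_lt_of_le hTlt (min_le_right _ _)))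
      exact absurd (csInf_le hDcompact.bddBelow hTD)
        (not_le.mpr (lt_of_lt_of_le hTlt (min_le_left _ _)))
    have : T₀ ∈ D := by
      have := hDcompact.sInf_mem hDne
      rwa [le_antisymm hD2 hD1] at this
    obtain ⟨⟨T, d⟩, hp, hfst⟩ := this
    exact hfst ▸ (⟨d, hp.2⟩ : LPfeasible T)
  -- unpack the optimal LP solution
  obtain ⟨d, hd1, hd2, hd3⟩ := hT₀mem
  have hT₀0 : (0:ℝ) ≤ T₀ := le_csInf hSne hnonneg
  constructor
  · constructor
    · -- T₀ admits a valid schedule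
      refine ⟨hT₀0, fun i => max (d i) 0, fun i => max (-(d i)) 0, ?_, ?_, ?_, ?_, ?_, ?_, ?_⟩
      · intro i; exact le_max_right _ _
      · intro i; exact le_max_right _ _
      · intro i
        rcases le_total (d i) 0 with h | h
        · exact Or.inl (max_eq_right h)
        · exact Or.inr (max_eq_right (by linarith))
      · intro i
        have := hd1 i
        have := abs_nonneg (d i)
        exact max_le (by nlinarith [le_abs_self (d i)]) (by nlinarith)
      · intro i
        have := hd1 i
        have := abs_nonneg (d i)
        exact max_le (by nlinarith [neg_abs_le (d i)]) (by nlinarith)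
      · intro i
        have h : max (d i) 0 - max (-(d i)) 0 = d i := by
          rcases le_total (d i) 0 with h | h
          · rw [max_eq_right h, max_eq_left (by linarith)]; ring
          · rw [max_eq_left h, max_eq_right (by linarith)]; ring
        rw [h]; exact hd2 i
      · have h : ∀ i, max (d i) 0 - max (-(d i)) 0 = d i := by
          intro i
          rcases le_total (d i) 0 with h | h
          · rw [max_eq_right h, max_eq_left (by linarith)]; ring
          · rw [max_eq_left h, max_eq_right (by linarith)]; ring
        have : ∑ i, (max (d i) 0 - max (-(d i)) 0) = 0 := by
          simp only [h]; exact hd3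
        rw [Finset.sum_sub_distrib] at this
        linarith
    · -- T₀ is a lower bound on valid schedules
      rintro T ⟨hT0, send, recv, hsnn, hrnn, hzero, hsb, hrb, hcomp, hsum⟩
      apply csInf_le hSbdd
      refine ⟨fun i => send i - recv i, fun i => ?_, hcomp, ?_⟩
      · show |send i - recv i| ≤ T * b i
        rcases hzero i with h | h
        · rw [h]; rw [abs_of_nonpos (by linarith [hrnn i])]
          simpa using hrb i
        · rw [h]; rw [abs_of_nonneg (by linarith [hsnn i])]
          simpa using hsb i
      · rw [Finset.sum_sub_distrib, hsum, sub_self]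
  · -- the flow construction
    refine ⟨d, hd1, hd2, hd3, ?_⟩
    intro Snd Rcv Lld f
    have hdisj : ∀ i ∈ Snd, ∀ j ∈ Rcv, i ≠ j := by
      intro i hi j hj h
      rw [Finset.mem_filter] at hi hj
      rw [h] at hi; linarith [hi.2, hj.2]
    have hsplit : Lld + ∑ j ∈ Rcv, d j = 0 := by
      have h1 : ∑ i ∈ Finset.univ.filter (fun i => 0 < d i), d i +
          ∑ i ∈ Finset.univ.filter (fun i => ¬ 0 < d i), d i = ∑ i, d i :=
        Finset.sum_filter_add_sum_filter_not _ _ _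
      have h2 : ∑ i ∈ Finset.univ.filter (fun i => ¬ 0 < d i), d i = ∑ j ∈ Rcv, d j := by
        symm
        apply Finset.sum_subset
        · intro j hj
          rw [Finset.mem_filter] at hj ⊢
          exact ⟨hj.1, by linarith [hj.2]⟩
        · intro j hj hj2
          rw [Finset.mem_filter] at hj hj2
          push_neg at hj2
          have := hj2 hj.1
          have := hj.2
          linarith
      rw [h2] at h1
      rw [hd3] at h1
      exact h1
    by_cases hSndE : Snd = ∅
    · have hRcvE : Rcv = ∅ := by
        by_contra h
        obtain ⟨j, hj⟩ := Finset.nonempty_iff_ne_empty.mpr h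
        have hneg : ∑ j ∈ Rcv, d j < 0 := by
          apply Finset.sum_neg
          · intro k hk
            exact (Finset.mem_filter.mp hk).2
          · exact ⟨j, hj⟩
        have : Lld = 0 := by simp [Lld, hSndE]
        linarith [hsplit]
      refine ⟨?_, ?_, ?_, ?_, ?_⟩ <;> simp [hSndE, hRcvE]
    · -- Snd nonempty
      have hSndne : Snd.Nonempty := Finset.nonempty_iff_ne_empty.mpr hSndE
      have hLpos : 0 < Lld := by
        apply Finset.sum_pos
        · intro i hi
          exact (Finset.mem_filter.mp hi).2
        · exact hSndne
      have hLne : -Lld ≠ 0 := by linarith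
      have hRsum : ∑ j ∈ Rcv, d j = -Lld := by linarith
      have hRcvne : Rcv.Nonempty := by
        by_contra h
        rw [Finset.not_nonempty_iff_eq_empty] at h
        rw [h] at hRsum
        simp at hRsum
        linarith
      -- T₀ > 0
      obtain ⟨j₀, hj₀⟩ := hRcvne
      have hj₀neg : d j₀ < 0 := (Finset.mem_filter.mp hj₀).2
      have hT₀pos : 0 < T₀ := by
        have h1 := hd1 j₀
        rw [abs_of_neg hj₀neg] at h1
        have := hb j₀
        nlinarith
      have hrow : ∀ i ∈ Snd, ∑ j ∈ Rcv, f i j = d i := by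
        intro i hi
        have : ∑ j ∈ Rcv, f i j = (d i * ∑ j ∈ Rcv, d j) / (-Lld) := by
          rw [Finset.mul_sum, Finset.sum_div]
        rw [this, hRsum, mul_div_assoc, div_self hLne, mul_one]
      have hcol : ∀ j ∈ Rcv, ∑ i ∈ Snd, f i j = -d j := by
        intro j hj
        have : ∑ i ∈ Snd, f i j = ((∑ i ∈ Snd, d i) * d j) / (-Lld) := by
          rw [Finset.sum_mul, Finset.sum_div]
        rw [this]
        field_simp
        ring
      refine ⟨hrow, hcol, ?_, ?_, ?_⟩
      · intro j hj
        rw [← Finset.sum_div, hcol j hj]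
        have hcomp := hd2 j
        rw [← add_div, div_le_iff₀ hT₀pos]
        linarith
      · intro i hi
        rw [← Finset.sum_div, hrow i hi]
        have h1 := hd1 i
        have hpos : 0 < d i := (Finset.mem_filter.mp hi).2
        rw [abs_of_pos hpos] at h1
        rw [div_le_iff₀ hT₀pos]
        linarith
      · intro j hj
        rw [← Finset.sum_div, hcol j hj]
        have h1 := hd1 j
        have hneg : d j < 0 := (Finset.mem_filter.mp hj).2
        rw [abs_of_neg hneg] at h1
        rw [div_le_iff₀ hT₀pos]
        linarith
end
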